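/- arXiv:2001.02369 — 15 statements merged into one kernel-verified Lean document; each statement's English description precedes it below -/
import Mathlib

section
/- Let 𝔄 be a unital C*-algebra, π : 𝔄 → B(H) a unital *-homomorphism that is irreducible in the sense that every nonzero vector ξ ∈ H is cyclic (the closure of {π(b)ξ : b ∈ 𝔄} is H), and A ⊆ 𝔄 a subalgebra such that A + A* is norm-dense in 𝔄. Assume there exists a masa M ⊆ B(H) contained in the closure of π(A) in the weak operator topology. Then the lattice of closed subspaces of H invariant under π(A) is totally ordered: for any two closed subspaces U, V of H with π(a)(U) ⊆ U and π(a)(V) ⊆ V for all a ∈ A, either U ⊆ V or V ⊆ U. -/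
/-!
A closed subspace invariant under `π(S)` is invariant under the WOT-closure of `π(S)`, hence under
the masa `M`; as `M` is self-adjoint, the orthogonal projection onto the subspace commutes with `M`
and so lies in `M' = M`. Thus the projections onto `U` and `V` commute, and if neither subspace
contains the other there are nonzero `ξ ∈ U ⊓ Vᗮ` and `η ∈ V ⊓ Uᗮ`. Invariance gives
`⟪η, π(a) ξ⟫ = 0 = ⟪η, π(b)* ξ⟫` for `a, b ∈ S`, so by density of `S + S*` the vector `η` is
orthogonal to `π(𝔄) ξ`, which is dense since `ξ` is cyclic; hence `η = 0`.
-/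

open scoped InnerProductSpace CStarAlgebra
open Module.End

namespace Submodule

variable {𝕜 E : Type*} [RCLike 𝕜] [NormedAddCommGroup E] [InnerProductSpace 𝕜 E]

theorem mem_invtSubmodule_of_mem_closure_ofCLM {W : Submodule 𝕜 E} [W.HasOrthogonalProjection]
    {𝒯 : Set (E →L[𝕜] E)} (h𝒯 : ∀ T ∈ 𝒯, W ∈ invtSubmodule (T : E →ₗ[𝕜] E))
    {T : E →L[𝕜] E}
    (hT : ContinuousLinearMapWOT.ofCLM T ∈ closure (ContinuousLinearMapWOT.ofCLM '' 𝒯)) :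
    W ∈ invtSubmodule (T : E →ₗ[𝕜] E) := by
  have hclosed : IsClosed {A : E →WOT[𝕜] E | ∀ x ∈ W, ∀ y ∈ Wᗮ, ⟪y, A x⟫_𝕜 = 0} := by
    simp only [Set.ofPred_forall]
    exact isClosed_biInter fun x _ => isClosed_biInter fun y _ =>
      isClosed_eq (ContinuousLinearMapWOT.continuous_dual_apply x (innerSL 𝕜 y)) continuous_const
  have hsub : ContinuousLinearMapWOT.ofCLM '' 𝒯 ⊆
      {A : E →WOT[𝕜] E | ∀ x ∈ W, ∀ y ∈ Wᗮ, ⟪y, A x⟫_𝕜 = 0} := by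
    rintro _ ⟨R, hR, rfl⟩ x hx y hy
    have hRx : R x ∈ W := h𝒯 R hR hx
    exact inner_left_of_mem_orthogonal hRx hy
  intro x hx
  have hTx : T x ∈ Wᗮᗮ :=
    (mem_orthogonal _ _).mpr fun y hy => closure_minimal hsub hclosed hT x hx y hy
  rwa [orthogonal_orthogonal] at hTx

theorem commute_starProjection_of_mem_invtSubmodule [CompleteSpace E] {W : Submodule 𝕜 E}
    [W.HasOrthogonalProjection]
    {T : E →L[𝕜] E} (hT : W ∈ invtSubmodule (T : E →ₗ[𝕜] E))
    (hT' : W ∈ invtSubmodule (T.adjoint : E →ₗ[𝕜] E)) : Commute W.starProjection T := by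
  rw [ContinuousLinearMap.IsIdempotentElem.commute_iff W.isIdempotentElem_starProjection,
    range_starProjection, ker_starProjection]
  exact ⟨hT, T.orthogonal_mem_invtSubmodule hT'⟩

theorem exists_mem_inf_orthogonal_ne_zero_of_commute {U V : Submodule 𝕜 E}
    [U.HasOrthogonalProjection] [V.HasOrthogonalProjection]
    (h : Commute U.starProjection V.starProjection) (hUV : ¬U ≤ V) :
    ∃ ξ ∈ U ⊓ Vᗮ, ξ ≠ 0 := by
  obtain ⟨u, huU, huV⟩ := SetLike.not_le_iff_exists.mp hUV
  have hQu : V.starProjection u ∈ U := by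
    rw [← starProjection_eq_self_iff.mpr huU, ← mul_apply_eq_comp, ← h.eq]
    exact starProjection_apply_mem U _
  refine ⟨u - V.starProjection u, ⟨U.sub_mem huU hQu, sub_starProjection_mem_orthogonal u⟩, ?_⟩
  rw [sub_ne_zero]
  intro hu
  exact huV (hu ▸ starProjection_apply_mem V u)

end Submodule

theorem inner_apply_eq_zero_of_dense_add_star {𝕜 𝔄 E : Type*} [RCLike 𝕜] [Semiring 𝔄]
    [Algebra 𝕜 𝔄] [Star 𝔄] [TopologicalSpace 𝔄] [NormedAddCommGroup E] [InnerProductSpace 𝕜 E]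
    [CompleteSpace E] {π : 𝔄 →⋆ₐ[𝕜] (E →L[𝕜] E)} (hπ : Continuous π) {S : Set 𝔄}
    (hS : Dense {x : 𝔄 | ∃ a ∈ S, ∃ b ∈ S, x = a + star b}) {ξ η : E}
    (hξη : ∀ a ∈ S, ⟪η, π a ξ⟫_𝕜 = 0) (hηξ : ∀ a ∈ S, ⟪ξ, π a η⟫_𝕜 = 0) (x : 𝔄) :
    ⟪η, π x ξ⟫_𝕜 = 0 := by
  have hcont : Continuous fun x => ⟪η, π x ξ⟫_𝕜 :=
    continuous_const.inner ((ContinuousLinearMap.apply 𝕜 E ξ).continuous.comp hπ)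
  refine congrFun (hcont.ext_on hS continuous_const ?_) x
  rintro _ ⟨a, ha, b, hb, rfl⟩
  change ⟪η, π (a + star b) ξ⟫_𝕜 = 0
  rw [map_add, map_star, add_apply, inner_add_right,
    ContinuousLinearMap.star_eq_adjoint, ContinuousLinearMap.adjoint_inner_right, hξη a ha,
    ← inner_conj_symm, hηξ b hb, map_zero, add_zero]

/-- A unital C*-algebra `𝔄`, a unital *-homomorphism `π : 𝔄 → B(H)` which is irreducible
(every nonzero vector is cyclic), and a subalgebra `S ⊆ 𝔄` with `S + S*` norm-dense in `𝔄`
(`S` is Dirichlet in `𝔄`).  If some masa `M` of `B(H)` (a unital *-subalgebra equal to its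
own commutant) is contained in the closure of `π(S)` in the weak operator topology, then the
closed `π(S)`-invariant subspaces of `H` are totally ordered. -/
theorem dirichlet_invariant_subspaces_totally_ordered
    {𝔄 : Type*} [NormedRing 𝔄] [StarRing 𝔄] [CStarRing 𝔄]
    [NormedAlgebra ℂ 𝔄] [CompleteSpace 𝔄] [StarModule ℂ 𝔄]
    {H : Type*} [NormedAddCommGroup H] [InnerProductSpace ℂ H] [CompleteSpace H]
    (π : 𝔄 →⋆ₐ[ℂ] (H →L[ℂ] H))
    (hirr : ∀ ξ : H, ξ ≠ 0 → Dense (Set.range fun b : 𝔄 => π b ξ))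
    (S : Subalgebra ℂ 𝔄)
    (hdir : Dense {x : 𝔄 | ∃ a ∈ S, ∃ b ∈ S, x = a + star b})
    (M : StarSubalgebra ℂ (H →L[ℂ] H))
    (hmasa : ∀ T : H →L[ℂ] H, T ∈ M ↔ ∀ R ∈ M, T * R = R * T)
    (hMwot : ∀ T ∈ M, (ContinuousLinearMapWOT.ofCLM : (H →L[ℂ] H) → H →WOT[ℂ] H) T ∈
      closure ((ContinuousLinearMapWOT.ofCLM : (H →L[ℂ] H) → H →WOT[ℂ] H) '' ((π : 𝔄 → H →L[ℂ] H) '' (S : Set 𝔄))))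
    (U V : Submodule ℂ H) (hUc : IsClosed (U : Set H)) (hVc : IsClosed (V : Set H))
    (hU : ∀ a ∈ S, ∀ ξ ∈ U, π a ξ ∈ U) (hV : ∀ a ∈ S, ∀ ξ ∈ V, π a ξ ∈ V) :
    U ≤ V ∨ V ≤ U := by
  -- makes `π` continuous, as every *-homomorphism between C*-algebras is
  let _ : CStarAlgebra 𝔄 := { }
  have : CompleteSpace U := hUc.completeSpace_coe
  have : CompleteSpace V := hVc.completeSpace_coe
  have starProjection_mem {W : Submodule ℂ H} [W.HasOrthogonalProjection]
      (hW : ∀ a ∈ S, ∀ ξ ∈ W, π a ξ ∈ W) : W.starProjection ∈ M := by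
    have hM : ∀ T ∈ M, W ∈ invtSubmodule (T : H →ₗ[ℂ] H) := fun T hT =>
      W.mem_invtSubmodule_of_mem_closure_ofCLM (by rintro _ ⟨a, ha, rfl⟩; exact hW a ha)
        (hMwot T hT)
    exact (hmasa _).mpr fun R hR => W.commute_starProjection_of_mem_invtSubmodule (hM R hR)
      (hM _ (ContinuousLinearMap.star_eq_adjoint R ▸ star_mem hR))
  have hPQ : Commute U.starProjection V.starProjection :=
    (hmasa _).mp (starProjection_mem hU) _ (starProjection_mem hV)
  by_contra! h
  obtain ⟨ξ, ⟨hξU, hξV⟩, hξ⟩ := Submodule.exists_mem_inf_orthogonal_ne_zero_of_commute hPQ h.1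
  obtain ⟨η, ⟨hηV, hηU⟩, hη⟩ := Submodule.exists_mem_inf_orthogonal_ne_zero_of_commute hPQ.symm h.2
  refine hη (DenseRange.eq_zero_of_inner_left ℂ (hirr ξ hξ)
    (inner_apply_eq_zero_of_dense_add_star (map_continuous π) hdir ?_ ?_))
  · exact fun a ha => Submodule.inner_left_of_mem_orthogonal (hU a ha ξ hξU) hηU
  · exact fun a ha => Submodule.inner_left_of_mem_orthogonal (hV a ha η hηV) hξV
end

section
/- Let ρ be a state of 𝔄 and φ a ℂ-linear functional on 𝔄 with φ(1) = 0 and |φ(a)| ≤ ρ(a) for every positive element a ∈ 𝔄. Then φ₀ := ρ + ½(φ + φ*) is a state of 𝔄. Moreover, φ₀(a) = ρ(a) for every a ∈ 𝔄 with φ(a) = 0 and φ(a*) = 0. -/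
open scoped ComplexOrder

/-!
`φ₀` is `ρ + ℜ φ`, where `ℜ` is the real part for the star `φ ↦ φ*` on functionals (Mathlib's
intrinsic star on `WithConv (A →ₗ[ℂ] ℂ)`), hence linear. For `a ≥ 0` we have `a* = a`, so
`(ℜ φ)(a) = Re φ(a) ≥ -‖φ(a)‖ ≥ -ρ(a)`, which gives `φ₀(a) ≥ 0`.
-/

open WithConv ComplexStarModule

theorem Complex.zero_le_add_re_of_norm_le {z w : ℂ} (h : (‖z‖ : ℂ) ≤ w) : 0 ≤ w + z.re :=
  calc (0 : ℂ) ≤ (‖z‖ : ℂ) + z.re := by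
        exact_mod_cast neg_le_iff_add_nonneg'.1 (neg_le_of_abs_le (Complex.abs_re_le_norm z))
    _ ≤ w + z.re := by gcongr

namespace LinearMap

variable {E : Type*} [AddCommGroup E] [Module ℂ E] [StarAddMonoid E] [StarModule ℂ E]

theorem realPart_toConv_apply (φ : E →ₗ[ℂ] ℂ) (a : E) :
    (ℜ (toConv φ) : WithConv (E →ₗ[ℂ] ℂ)) a =
      (1 / 2 : ℂ) * (φ a + starRingEnd ℂ (φ (star a))) := by
  simp only [realPart_apply_coe, ofConv_smul, ofConv_add, smul_apply, add_apply,
    intrinsicStar_apply, Complex.real_smul, Complex.ofReal_inv, Complex.ofReal_ofNat,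
    RCLike.star_def, one_div]

theorem realPart_toConv_apply_of_isSelfAdjoint (φ : E →ₗ[ℂ] ℂ) {a : E} (ha : IsSelfAdjoint a) :
    (ℜ (toConv φ) : WithConv (E →ₗ[ℂ] ℂ)) a = (φ a).re := by
  rw [realPart_toConv_apply, ha.star_eq, Complex.re_eq_add_conj]
  ring

end LinearMap

theorem state_add_half_phi_add_phiStar_isState_general
    {A : Type*} [NormedRing A] [StarRing A]
    [NormedAlgebra ℂ A] [StarModule ℂ A]
    [PartialOrder A] [StarOrderedRing A]
    (ρ φ : A →ₗ[ℂ] ℂ)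
    (hρone : ρ 1 = 1)
    (hφone : φ 1 = 0)
    (hφbound : ∀ a : A, 0 ≤ a → ((‖φ a‖ : ℝ) : ℂ) ≤ ρ a)
    (φ₀ : A → ℂ)
    (hφ₀ : ∀ a : A, φ₀ a = ρ a + (1 / 2 : ℂ) * (φ a + (starRingEnd ℂ) (φ (star a)))) :
    IsLinearMap ℂ φ₀ ∧ (∀ a : A, 0 ≤ a → 0 ≤ φ₀ a) ∧ φ₀ 1 = 1 ∧
      (∀ a : A, φ a = 0 → φ (star a) = 0 → φ₀ a = ρ a) := by
  have hφ₀_eq : φ₀ = ⇑(ρ + ofConv (ℜ (toConv φ) : WithConv (A →ₗ[ℂ] ℂ))) := by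
    funext a
    exact (hφ₀ a).trans congr(ρ a + $((LinearMap.realPart_toConv_apply φ a).symm))
  refine ⟨hφ₀_eq ▸ LinearMap.isLinear _, fun a ha => ?_, ?_, fun a h hstar => ?_⟩
  · have hre := LinearMap.realPart_toConv_apply_of_isSelfAdjoint φ (IsSelfAdjoint.of_nonneg ha)
    rw [hφ₀_eq, LinearMap.add_apply]
    exact hre ▸ Complex.zero_le_add_re_of_norm_le (hφbound a ha)
  · simp [hφ₀, hρone, hφone]
  · simp [hφ₀, h, hstar]

/-- Let `ρ` be a state of a unital C*-algebra `A` and `φ` a linear functional with `φ(1) = 0`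
and `|φ(a)| ≤ ρ(a)` for every positive `a`.  Then `φ₀ = ρ + ½(φ + φ*)` (where
`φ*(a) = conj (φ (a*))`) is a state of `A`, and `φ₀(a) = ρ(a)` whenever `φ(a) = 0 = φ(a*)`. -/
theorem state_add_half_phi_add_phiStar_isState
    {A : Type*} [NormedRing A] [StarRing A] [CStarRing A]
    [NormedAlgebra ℂ A] [CompleteSpace A] [StarModule ℂ A]
    [PartialOrder A] [StarOrderedRing A]
    (ρ φ : A →ₗ[ℂ] ℂ)
    (hρpos : ∀ a : A, 0 ≤ a → 0 ≤ ρ a) (hρone : ρ 1 = 1)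
    (hφone : φ 1 = 0)
    (hφbound : ∀ a : A, 0 ≤ a → ((‖φ a‖ : ℝ) : ℂ) ≤ ρ a)
    (φ₀ : A → ℂ)
    (hφ₀ : ∀ a : A, φ₀ a = ρ a + (1 / 2 : ℂ) * (φ a + (starRingEnd ℂ) (φ (star a)))) :
    IsLinearMap ℂ φ₀ ∧ (∀ a : A, 0 ≤ a → 0 ≤ φ₀ a) ∧ φ₀ 1 = 1 ∧
      (∀ a : A, φ a = 0 → φ (star a) = 0 → φ₀ a = ρ a) :=
  state_add_half_phi_add_phiStar_isState_general ρ φ hρone hφone hφbound φ₀ hφ₀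
end

section
/- Let x₀ be a character of M, ρ₀ the state of 𝔄 defined by ρ₀(a) = x₀(E(a)), and n a normalizer of M with x₀(n*n) > 0 and x₀(n* h n) = x₀(h) · x₀(n*n) for all h ∈ M (so αₙ fixes x₀). Define the linear functional φ on 𝔄 by φ(a) = x₀(E(n* a))/√(x₀(n*n)). Then |φ(a)| ≤ ρ₀(a) for every positive element a ∈ 𝔄. -/
open scoped ComplexOrder InnerProductSpace

variable {A : Type*} [NormedRing A] [StarRing A] [CStarRing A]
  [NormedAlgebra ℂ A] [CompleteSpace A] [StarModule ℂ A]
  [PartialOrder A] [StarOrderedRing A]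

/-- `n` is a normalizer of the subalgebra `M`: `n* M n ⊆ M` and `n M n* ⊆ M`
(in particular `n*n ∈ M` and `n n* ∈ M`, taking `h = 1`). -/
structure IsNormalizer (M : StarSubalgebra ℂ A) (n : A) : Prop where
  conj_mem : ∀ h ∈ M, star n * h * n ∈ M
  conj_mem' : ∀ h ∈ M, n * h * star n ∈ M
  sq_mem : star n * n ∈ M
  sq_mem' : n * star n ∈ M

/-- `y = αₙ(x)`: the character `y` satisfies `x(n* h n) = y(h) · x(n*n)` for all `h ∈ M`. -/
def IsAlpha (M : StarSubalgebra ℂ A) (n : A) (hn : IsNormalizer M n)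
    (x y : M →⋆ₐ[ℂ] ℂ) : Prop :=
  ∀ h : M, x ⟨star n * (h : A) * n, hn.conj_mem (h : A) h.2⟩
    = y h * x ⟨star n * n, hn.sq_mem⟩

/-- `y` lies in the pseudo-orbit `𝒢(x₀)`: there is a normalizer `m` of `M` with
`x₀(m*m) ≠ 0` and `y = α_m(x₀)`. -/
def InPseudoOrbit (M : StarSubalgebra ℂ A) (x₀ y : M →⋆ₐ[ℂ] ℂ) : Prop :=
  ∃ m, ∃ hm : IsNormalizer M m,
    x₀ ⟨star m * m, hm.sq_mem⟩ ≠ 0 ∧ IsAlpha M m hm x₀ y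

/-! The functional `ρ = x₀ ∘ E` is positive, so Cauchy–Schwarz for `(b, c) ↦ ρ (b* c)` applied to
`b = √a n`, `c = √a` gives `|ρ (n* a)|² ≤ ρ (n* a n) ρ (a)`. Covariance of `E` and the fixed-point
property of `x₀` turn `ρ (n* a n)` into `ρ (a) x₀ (n* n)`. -/

section

variable {B : Type*} [CStarAlgebra B] [PartialOrder B] [StarOrderedRing B]

theorem StarSubalgebra.map_nonneg_of_isClosed {M : StarSubalgebra ℂ B}
    (hM : IsClosed (M : Set B)) {F : Type*} [FunLike F M ℂ] [AlgHomClass F ℂ M ℂ] (χ : F)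
    {m : M} (hm : 0 ≤ (m : B)) : 0 ≤ χ m := by
  have hspec : χ m ∈ spectrum ℂ (m : B) :=
    StarSubalgebra.spectrum_eq (hS := hM) (a := m) ▸ AlgHom.apply_mem_spectrum χ m
  exact spectrum_nonneg_of_nonneg hm hspec

noncomputable def StarSubalgebra.characterState {M : StarSubalgebra ℂ B}
    (hM : IsClosed (M : Set B)) (E : B →ₗ[ℂ] B) (hErange : ∀ a, E a ∈ M)
    (hEpos : ∀ a : B, 0 ≤ a → 0 ≤ E a) (χ : M →⋆ₐ[ℂ] ℂ) : B →ₚ[ℂ] ℂ :=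
  .mk₀ (χ.toAlgHom.toLinearMap ∘ₗ E.codRestrict (Subalgebra.toSubmodule M.toSubalgebra) hErange)
    fun a ha ↦ map_nonneg_of_isClosed hM χ (m := ⟨E a, hErange a⟩) (hEpos a ha)

theorem StarSubalgebra.characterState_apply {M : StarSubalgebra ℂ B}
    (hM : IsClosed (M : Set B)) (E : B →ₗ[ℂ] B) (hErange : ∀ a, E a ∈ M)
    (hEpos : ∀ a : B, 0 ≤ a → 0 ≤ E a) (χ : M →⋆ₐ[ℂ] ℂ) (a : B) :
    characterState hM E hErange hEpos χ a = χ ⟨E a, hErange a⟩ := rfl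

namespace PositiveLinearMap

variable (f : B →ₚ[ℂ] ℂ)

theorem norm_apply_star_mul_sq_le (b c : B) :
    ‖f (star b * c)‖ ^ 2 ≤ ‖f (star b * b)‖ * ‖f (star c * c)‖ := by
  have hcs := norm_inner_le_norm (𝕜 := ℂ) (f.toPreGNS b) (f.toPreGNS c)
  have hnorm (x : B) : ‖f.toPreGNS x‖ ^ 2 = ‖f (star x * x)‖ := by
    rw [← Complex.ofReal_inj, Complex.ofReal_pow, preGNS_norm_sq]
    exact Complex.eq_coe_norm_of_nonneg (f.map_nonneg (star_mul_self_nonneg x))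
  calc ‖f (star b * c)‖ ^ 2 ≤ (‖f.toPreGNS b‖ * ‖f.toPreGNS c‖) ^ 2 := by
        gcongr; exact hcs
    _ = ‖f (star b * b)‖ * ‖f (star c * c)‖ := by rw [mul_pow, hnorm, hnorm]

theorem norm_apply_star_mul_sq_le_of_nonneg {a : B} (ha : 0 ≤ a) (n : B) :
    ‖f (star n * a)‖ ^ 2 ≤ ‖f (star n * a * n)‖ * ‖f a‖ := by
  set s := CFC.sqrt a
  have hs : star s = s := (CFC.sqrt_nonneg a).isSelfAdjoint.star_eq
  have hss : s * s = a := CFC.sqrt_mul_sqrt_self a ha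
  simpa [hs, mul_assoc, hss, ← mul_assoc s] using f.norm_apply_star_mul_sq_le (s * n) s

end PositiveLinearMap

end

theorem Complex.ofReal_norm_div_sqrt_le {z r t : ℂ} (hr : 0 ≤ r) (ht : 0 < t)
    (h : ‖z‖ ^ 2 ≤ ‖r‖ * ‖t‖ * ‖r‖) : ((‖z / (√t.re : ℂ)‖ : ℝ) : ℂ) ≤ r := by
  have hsqrt : 0 < √t.re := Real.sqrt_pos.mpr (Complex.pos_iff.mp ht).1
  have htre : t.re = ‖t‖ := Complex.re_eq_norm.mpr ht.le
  rw [Complex.eq_coe_norm_of_nonneg hr, Complex.real_le_real, norm_div, Complex.norm_real,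
    Real.norm_of_nonneg hsqrt.le, div_le_iff₀ hsqrt, htre]
  refine abs_le_of_sq_le_sq' ?_ (by positivity) |>.2
  rw [mul_pow, Real.sq_sqrt (norm_nonneg t)]
  linarith

theorem abs_phi_le_rho_of_fixed_point_general
    (M : StarSubalgebra ℂ A) (hMclosed : IsClosed (M : Set A))
    (E : A →ₗ[ℂ] A)
    (hErange : ∀ a, E a ∈ M)
    (hEpos : ∀ a : A, 0 ≤ a → 0 ≤ E a)
    (hEcov : ∀ k, IsNormalizer M k → ∀ a, E (star k * a * k) = star k * E a * k)
    (x₀ : M →⋆ₐ[ℂ] ℂ)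
    (n : A) (hn : IsNormalizer M n)
    (hpos : 0 < x₀ ⟨star n * n, hn.sq_mem⟩)
    (hfix : IsAlpha M n hn x₀ x₀) :
    ∀ a : A, 0 ≤ a →
      (‖x₀ ⟨E (star n * a), hErange _⟩
          / (Real.sqrt ((x₀ ⟨star n * n, hn.sq_mem⟩).re) : ℂ)‖ : ℂ)
        ≤ x₀ ⟨E a, hErange a⟩ := by
  intro a ha
  let : CStarAlgebra A := {}
  set ρ := StarSubalgebra.characterState hMclosed E hErange hEpos x₀
  have hcov : ρ (star n * a * n) = ρ a * x₀ ⟨star n * n, hn.sq_mem⟩ := by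
    rw [StarSubalgebra.characterState_apply, StarSubalgebra.characterState_apply, ← hfix]
    exact congrArg x₀ (Subtype.ext (hEcov n hn a))
  have hcs := ρ.norm_apply_star_mul_sq_le_of_nonneg ha n
  rw [hcov, norm_mul] at hcs
  exact Complex.ofReal_norm_div_sqrt_le (ρ.map_nonneg ha) hpos hcs

/-- If `x₀` is a character of `M` fixed by `αₙ` for a normalizer `n` with `x₀(n*n) > 0`,
then the functional `φ(a) = x₀(E(n* a)) / √(x₀(n*n))` satisfies `|φ(a)| ≤ ρ₀(a) = x₀(E(a))`
for every positive `a ∈ A`. -/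
theorem abs_phi_le_rho_of_fixed_point
    (M : StarSubalgebra ℂ A) (hMclosed : IsClosed (M : Set A))
    (hMcomm : ∀ a ∈ M, ∀ b ∈ M, a * b = b * a)
    (E : A →ₗ[ℂ] A)
    (hErange : ∀ a, E a ∈ M)
    (hEfix : ∀ h ∈ M, E h = h)
    (hEpos : ∀ a : A, 0 ≤ a → 0 ≤ E a)
    (hEcov : ∀ k, IsNormalizer M k → ∀ a, E (star k * a * k) = star k * E a * k)
    (x₀ : M →⋆ₐ[ℂ] ℂ)
    (n : A) (hn : IsNormalizer M n)
    (hpos : 0 < x₀ ⟨star n * n, hn.sq_mem⟩)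
    (hfix : IsAlpha M n hn x₀ x₀) :
    ∀ a : A, 0 ≤ a →
      (‖x₀ ⟨E (star n * a), hErange _⟩
          / (Real.sqrt ((x₀ ⟨star n * n, hn.sq_mem⟩).re) : ℂ)‖ : ℂ)
        ≤ x₀ ⟨E a, hErange a⟩ :=
  abs_phi_le_rho_of_fixed_point_general M hMclosed E hErange hEpos hEcov x₀ n hn hpos hfix
end

section
/- For a ∈ 𝔄, π(a) = 0 if and only if y(E(a* a)) = 0 for every character y in the pseudo-orbit 𝒢(x₀). -/
open scoped ComplexOrder InnerProductSpace

variable {A : Type*} [NormedRing A] [StarRing A] [CStarRing A]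
  [NormedAlgebra ℂ A] [CompleteSpace A] [StarModule ℂ A]
  [PartialOrder A] [StarOrderedRing A]

/-!
For a normalizer `m`, covariance of `E` gives
`‖π(a) π(m) ξ‖² = x₀(E(m* a* a m)) = x₀(m* E(a* a) m)`. Since `m m*` commutes with `M`,
`h ↦ x₀(m* h m)` is multiplicative up to the factor `x₀(m* m)`: if that factor is nonzero,
`h ↦ x₀(m* h m) / x₀(m* m)` is the character `α_m(x₀)` of the pseudo-orbit, and if it vanishes
then so does `x₀(m* h m)` for every `h`. Hence the condition on the pseudo-orbit says exactly that
`π(a)` kills every `π(m) ξ`, and these vectors span a dense subspace by regularity of `M` and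
cyclicity of `ξ`.
-/

open scoped CStarAlgebra

theorem conj_mul_conj_of_commute {R : Type*} [Semigroup R] {m m' h k : R}
    (hk : Commute (m * m') k) : (m' * h * m) * (m' * k * m) = (m' * (h * k) * m) * (m' * m) := by
  calc (m' * h * m) * (m' * k * m) = m' * h * (m * m' * k) * m := by simp only [mul_assoc]
    _ = m' * h * (k * (m * m')) * m := by rw [hk.eq]
    _ = (m' * (h * k) * m) * (m' * m) := by simp only [mul_assoc]

section Conjugation

omit [CStarRing A] [CompleteSpace A] [PartialOrder A] [StarOrderedRing A]

namespace IsNormalizer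

variable {M : StarSubalgebra ℂ A} {m : A} (hm : IsNormalizer M m)

def conj : M →ₗ[ℂ] M where
  toFun h := ⟨star m * h * m, hm.conj_mem h h.2⟩
  map_add' h k := Subtype.ext (by simp [mul_add, add_mul])
  map_smul' c h := Subtype.ext (by simp)

@[simp]
theorem coe_conj (h : M) : (hm.conj h : A) = star m * h * m := rfl

theorem conj_one : hm.conj 1 = ⟨star m * m, hm.sq_mem⟩ :=
  Subtype.ext (by simp)

theorem conj_star (h : M) : hm.conj (star h) = star (hm.conj h) :=
  Subtype.ext (by simp [mul_assoc])

theorem conj_mul_conj (hMcomm : ∀ a ∈ M, ∀ b ∈ M, a * b = b * a) (h k : M) :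
    hm.conj h * hm.conj k = hm.conj (h * k) * hm.conj 1 :=
  Subtype.ext <| by
    simpa using conj_mul_conj_of_commute (h := (h : A)) (hMcomm _ hm.sq_mem' _ k.2)

theorem map_conj_eq_zero (hMcomm : ∀ a ∈ M, ∀ b ∈ M, a * b = b * a) (x : M →⋆ₐ[ℂ] ℂ)
    (hx : x (hm.conj 1) = 0) (h : M) : x (hm.conj h) = 0 := by
  have hsq : x (hm.conj h) * star (x (hm.conj h)) = 0 := by
    rw [← map_star, ← hm.conj_star, ← map_mul, hm.conj_mul_conj hMcomm, map_mul, hx, mul_zero]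
  simpa using hsq

theorem star_map_conj_one (x : M →⋆ₐ[ℂ] ℂ) : star (x (hm.conj 1)) = x (hm.conj 1) := by
  rw [← map_star, ← hm.conj_star, star_one]

noncomputable def conjChar (hMcomm : ∀ a ∈ M, ∀ b ∈ M, a * b = b * a) (x : M →⋆ₐ[ℂ] ℂ)
    (hx : x (hm.conj 1) ≠ 0) : M →⋆ₐ[ℂ] ℂ :=
  { AlgHom.ofLinearMap ((x (hm.conj 1))⁻¹ • (x.toLinearMap ∘ₗ hm.conj)) (by simp [hx])
      (fun h k => by
        have key := congrArg x (hm.conj_mul_conj hMcomm h k)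
        simp only [map_mul] at key
        simp only [LinearMap.smul_apply, LinearMap.comp_apply, AlgHom.toLinearMap_apply,
          StarAlgHom.coe_toAlgHom, smul_eq_mul]
        field_simp
        rw [key, mul_comm]) with
    map_star' := fun h => by
      change _ * x (hm.conj (star h)) = star (_ * x (hm.conj h))
      rw [star_mul', star_inv₀, hm.star_map_conj_one, hm.conj_star, map_star] }

theorem isAlpha_conjChar (hMcomm : ∀ a ∈ M, ∀ b ∈ M, a * b = b * a) (x : M →⋆ₐ[ℂ] ℂ)
    (hx : x (hm.conj 1) ≠ 0) : IsAlpha M m hm x (hm.conjChar hMcomm x hx) := by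
  intro h
  change x (hm.conj h) = (x (hm.conj 1))⁻¹ * x (hm.conj h) * _
  rw [← hm.conj_one]
  field_simp

end IsNormalizer

theorem forall_inPseudoOrbit_eq_zero_iff {M : StarSubalgebra ℂ A}
    (hMcomm : ∀ a ∈ M, ∀ b ∈ M, a * b = b * a) (x₀ : M →⋆ₐ[ℂ] ℂ) (h : M) :
    (∀ y, InPseudoOrbit M x₀ y → y h = 0) ↔
      ∀ m (hm : IsNormalizer M m), x₀ (hm.conj h) = 0 := by
  constructor
  · intro hy m hm
    by_cases hx : x₀ (hm.conj 1) = 0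
    · exact hm.map_conj_eq_zero hMcomm x₀ hx h
    · have hα := hm.isAlpha_conjChar hMcomm x₀ hx
      have hy' := hy _ ⟨m, hm, hm.conj_one ▸ hx, hα⟩
      rw [show x₀ (hm.conj h) = _ from hα h, hy', zero_mul]
  · rintro hconj y ⟨m, hm, hx, hα⟩
    have := (hα h).symm.trans (hconj m hm)
    exact (mul_eq_zero.mp this).resolve_right hx

end Conjugation

section GNS

variable {H : Type*} [NormedAddCommGroup H] [InnerProductSpace ℂ H] [CompleteSpace H]

theorem StarAlgHom.inner_apply_apply {B : Type*} [Semiring B] [StarRing B] [Algebra ℂ B]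
    (π : B →⋆ₐ[ℂ] (H →L[ℂ] H)) (b c : B) (ξ η : H) :
    ⟪π b ξ, π c η⟫_ℂ = ⟪ξ, π (star b * c) η⟫_ℂ := by
  rw [map_mul, map_star, mul_apply_eq_comp, ContinuousLinearMap.star_eq_adjoint,
    ContinuousLinearMap.adjoint_inner_right]

theorem StarAlgHom.eq_zero_of_apply_apply_eq_zero {B : Type*} [CStarAlgebra B]
    (π : B →⋆ₐ[ℂ] (H →L[ℂ] H)) {S : Set B}
    (hS : Dense (Submodule.span ℂ S : Set B)) {ξ : H} (hξ : Dense (Set.range fun b => π b ξ))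
    {T : H →L[ℂ] H} (hT : ∀ s ∈ S, T (π s ξ) = 0) : T = 0 := by
  let πL : B →L[ℂ] (H →L[ℂ] H) := ⟨(π : B →ₗ[ℂ] (H →L[ℂ] H)), map_continuous π⟩
  have hvec : T ∘L ContinuousLinearMap.apply ℂ H ξ ∘L πL = 0 :=
    ContinuousLinearMap.ext_on hS hT
  refine ContinuousLinearMap.ext_on (hξ.mono Submodule.subset_span) ?_
  rintro _ ⟨b, rfl⟩
  exact DFunLike.congr_fun hvec b

end GNS

theorem pi_eq_zero_iff_vanishes_on_pseudoOrbit_general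
    (M : StarSubalgebra ℂ A)
    (hMcomm : ∀ a ∈ M, ∀ b ∈ M, a * b = b * a)
    (E : A →ₗ[ℂ] A)
    (hErange : ∀ a, E a ∈ M)
    (hEcov : ∀ k, IsNormalizer M k → ∀ a, E (star k * a * k) = star k * E a * k)
    (hreg : Dense (↑(Submodule.span ℂ {n : A | IsNormalizer M n}) : Set A))
    (x₀ : M →⋆ₐ[ℂ] ℂ)
    {H : Type*} [NormedAddCommGroup H] [InnerProductSpace ℂ H] [CompleteSpace H]
    (π : A →⋆ₐ[ℂ] (H →L[ℂ] H)) (ξ : H)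
    (hcyc : Dense (Set.range fun a : A => π a ξ))
    (hGNS : ∀ a : A, ⟪ξ, π a ξ⟫_ℂ = x₀ ⟨E a, hErange a⟩) :
    ∀ a : A, π a = 0 ↔
      ∀ y : M →⋆ₐ[ℂ] ℂ, InPseudoOrbit M x₀ y →
        y ⟨E (star a * a), hErange _⟩ = 0 := by
  intro a
  let : CStarAlgebra A := ⟨⟩
  have hnorm : ∀ m (hm : IsNormalizer M m),
      ⟪π a (π m ξ), π a (π m ξ)⟫_ℂ = x₀ (hm.conj ⟨E (star a * a), hErange _⟩) := by
    intro m hm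
    rw [← mul_apply_eq_comp, ← map_mul, π.inner_apply_apply, hGNS]
    congr 1
    ext
    simp [← hEcov m hm, mul_assoc]
  rw [forall_inPseudoOrbit_eq_zero_iff hMcomm]
  constructor
  · intro hπ m hm
    rw [← hnorm, hπ, zero_apply, inner_zero_left]
  · intro hconj
    refine π.eq_zero_of_apply_apply_eq_zero hreg hcyc fun m hm => ?_
    exact inner_self_eq_zero.mp ((hnorm m hm).trans (hconj m hm))

/-- Let `(π, ξ)` be the GNS representation of the state `a ↦ x₀(E(a))` of a Cartan-type pair
`(A, M)` with `M` regular.  Then `π(a) = 0` if and only if `y(E(a* a)) = 0` for every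
character `y` in the pseudo-orbit `𝒢(x₀)`. -/
theorem pi_eq_zero_iff_vanishes_on_pseudoOrbit
    (M : StarSubalgebra ℂ A) (hMclosed : IsClosed (M : Set A))
    (hMcomm : ∀ a ∈ M, ∀ b ∈ M, a * b = b * a)
    (E : A →ₗ[ℂ] A)
    (hErange : ∀ a, E a ∈ M)
    (hEfix : ∀ h ∈ M, E h = h)
    (hEpos : ∀ a : A, 0 ≤ a → 0 ≤ E a)
    (hEcov : ∀ k, IsNormalizer M k → ∀ a, E (star k * a * k) = star k * E a * k)
    (hreg : Dense (↑(Submodule.span ℂ {n : A | IsNormalizer M n}) : Set A))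
    (x₀ : M →⋆ₐ[ℂ] ℂ)
    {H : Type*} [NormedAddCommGroup H] [InnerProductSpace ℂ H] [CompleteSpace H]
    (π : A →⋆ₐ[ℂ] (H →L[ℂ] H)) (ξ : H)
    (hcyc : Dense (Set.range fun a : A => π a ξ))
    (hGNS : ∀ a : A, ⟪ξ, π a ξ⟫_ℂ = x₀ ⟨E a, hErange a⟩) :
    ∀ a : A, π a = 0 ↔
      ∀ y : M →⋆ₐ[ℂ] ℂ, InPseudoOrbit M x₀ y →
        y ⟨E (star a * a), hErange _⟩ = 0 :=
  pi_eq_zero_iff_vanishes_on_pseudoOrbit_general M hMcomm E hErange hEcov hreg x₀ π ξ hcyc hGNS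
end

section
/- For h ∈ M, π(h) = 0 if and only if y(h) = 0 for every character y in the pseudo-orbit 𝒢(x₀). Moreover, if a ∈ 𝔄 and π(a) = 0, then π(E(a)) = 0. -/
open scoped ComplexOrder InnerProductSpace

set_option synthInstance.maxHeartbeats 1000000
set_option maxHeartbeats 1000000

variable {A : Type*} [NormedRing A] [StarRing A] [CStarRing A]
  [NormedAlgebra ℂ A] [CompleteSpace A] [StarModule ℂ A]
  [PartialOrder A] [StarOrderedRing A]

/-- Auxiliary: if `x₀(m*m) ≠ 0` for a normalizer `m`, then `α_m(x₀)` exists as a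
character of `M`. -/
lemma exists_alpha_character (M : StarSubalgebra ℂ A)
    (hMcomm : ∀ a ∈ M, ∀ b ∈ M, a * b = b * a)
    (x₀ : M →⋆ₐ[ℂ] ℂ) (m : A) (hm : IsNormalizer M m)
    (hne : x₀ ⟨star m * m, hm.sq_mem⟩ ≠ 0) :
    ∃ y : M →⋆ₐ[ℂ] ℂ, IsAlpha M m hm x₀ y := by
  set c : ℂ := x₀ ⟨star m * m, hm.sq_mem⟩ with hc
  have hcreal : star c = c := by
    rw [hc, ← map_star]
    congr 1
    ext
    simp [star_mul, mul_assoc]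
  refine ⟨{ toFun := fun h => x₀ ⟨star m * (h : A) * m, hm.conj_mem (h : A) h.2⟩ / c
            map_one' := ?_
            map_mul' := ?_
            map_zero' := ?_
            map_add' := ?_
            commutes' := ?_
            map_star' := ?_ }, ?_⟩
  · show x₀ ⟨star m * ((1 : M) : A) * m, hm.conj_mem _ (1 : M).2⟩ / c = 1
    have : (⟨star m * ((1 : M) : A) * m, hm.conj_mem _ (1 : M).2⟩ : M)
        = ⟨star m * m, hm.sq_mem⟩ := by
      ext; simp
    rw [this, ← hc, div_self hne]
  · intro h k
    have hcomm : (m * star m) * (k : A) = (k : A) * (m * star m) :=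
      hMcomm _ hm.sq_mem' _ k.2
    have hA : (star m * ((h : A)) * m) * (star m * (k : A) * m)
        = (star m * ((h * k : M) : A) * m) * (star m * m) := by
      have h1 : (star m * ((h : A)) * m) * (star m * (k : A) * m)
          = star m * (h : A) * ((m * star m) * (k : A)) * m := by noncomm_ring
      rw [h1, hcomm]
      push_cast
      noncomm_ring
    have key : x₀ ⟨star m * ((h * k : M) : A) * m, hm.conj_mem _ (h * k).2⟩ * c
        = x₀ ⟨star m * (h : A) * m, hm.conj_mem _ h.2⟩
          * x₀ ⟨star m * (k : A) * m, hm.conj_mem _ k.2⟩ := by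
      rw [hc, ← map_mul, ← map_mul]
      congr 1
      ext
      exact hA.symm
    show x₀ ⟨star m * ((h * k : M) : A) * m, hm.conj_mem _ (h * k).2⟩ / c
        = (x₀ ⟨star m * (h : A) * m, hm.conj_mem _ h.2⟩ / c)
          * (x₀ ⟨star m * (k : A) * m, hm.conj_mem _ k.2⟩ / c)
    rw [div_mul_div_comm, ← key, div_eq_div_iff hne (mul_ne_zero hne hne)]
    ring
  · show x₀ ⟨star m * ((0 : M) : A) * m, hm.conj_mem _ (0 : M).2⟩ / c = 0
    have : (⟨star m * ((0 : M) : A) * m, hm.conj_mem _ (0 : M).2⟩ : M) = 0 := by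
      ext; simp
    rw [this, map_zero, zero_div]
  · intro h k
    show x₀ ⟨star m * ((h + k : M) : A) * m, hm.conj_mem _ (h + k).2⟩ / c
        = x₀ ⟨star m * (h : A) * m, hm.conj_mem _ h.2⟩ / c
          + x₀ ⟨star m * (k : A) * m, hm.conj_mem _ k.2⟩ / c
    have : (⟨star m * ((h + k : M) : A) * m, hm.conj_mem _ (h + k).2⟩ : M)
        = ⟨star m * (h : A) * m, hm.conj_mem _ h.2⟩
          + ⟨star m * (k : A) * m, hm.conj_mem _ k.2⟩ := by
      ext; push_cast; noncomm_ring
    rw [this, map_add x₀, add_div]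
  · intro r
    show x₀ ⟨star m * ((algebraMap ℂ M r : M) : A) * m,
        hm.conj_mem _ (algebraMap ℂ M r).2⟩ / c = algebraMap ℂ ℂ r
    have : (⟨star m * ((algebraMap ℂ M r : M) : A) * m,
          hm.conj_mem _ (algebraMap ℂ M r).2⟩ : M)
        = r • ⟨star m * m, hm.sq_mem⟩ := by
      ext
      push_cast
      rw [Algebra.algebraMap_eq_smul_one]
      simp [mul_smul_comm, smul_mul_assoc]
    rw [this, Algebra.smul_def, map_mul x₀, AlgHomClass.commutes,
      mul_div_assoc, div_self hne, mul_one]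
  · intro h
    show x₀ ⟨star m * ((star h : M) : A) * m, hm.conj_mem _ (star h).2⟩ / c
        = star (x₀ ⟨star m * (h : A) * m, hm.conj_mem _ h.2⟩ / c)
    have : (⟨star m * ((star h : M) : A) * m, hm.conj_mem _ (star h).2⟩ : M)
        = star (⟨star m * (h : A) * m, hm.conj_mem _ h.2⟩ : M) := by
      ext; simp [star_mul, mul_assoc]
    rw [this, map_star, star_div₀, hcreal]
  · intro h
    show x₀ ⟨star m * (h : A) * m, hm.conj_mem _ h.2⟩
        = (x₀ ⟨star m * (h : A) * m, hm.conj_mem _ h.2⟩ / c) * c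
    rw [div_mul_cancel₀ _ hne]

/-- In the GNS representation `(π, ξ)` of the state `a ↦ x₀(E(a))`: for `h ∈ M`,
`π(h) = 0` iff `y(h) = 0` for all characters `y` in the pseudo-orbit `𝒢(x₀)`; moreover
`π(a) = 0` implies `π(E(a)) = 0`. -/
theorem pi_restrict_masa_kernel_and_expectation
    (M : StarSubalgebra ℂ A) (hMclosed : IsClosed (M : Set A))
    (hMcomm : ∀ a ∈ M, ∀ b ∈ M, a * b = b * a)
    (E : A →ₗ[ℂ] A)
    (hErange : ∀ a, E a ∈ M)
    (hEfix : ∀ h ∈ M, E h = h)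
    (hEpos : ∀ a : A, 0 ≤ a → 0 ≤ E a)
    (hEcov : ∀ k, IsNormalizer M k → ∀ a, E (star k * a * k) = star k * E a * k)
    (hreg : Dense (↑(Submodule.span ℂ {n : A | IsNormalizer M n}) : Set A))
    (x₀ : M →⋆ₐ[ℂ] ℂ)
    {H : Type*} [NormedAddCommGroup H] [InnerProductSpace ℂ H] [CompleteSpace H]
    (π : A →⋆ₐ[ℂ] (H →L[ℂ] H)) (ξ : H)
    (hcyc : Dense (Set.range fun a : A => π a ξ))
    (hGNS : ∀ a : A, ⟪ξ, π a ξ⟫_ℂ = x₀ ⟨E a, hErange a⟩) :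
    (∀ h : M, π (h : A) = 0 ↔
      ∀ y : M →⋆ₐ[ℂ] ℂ, InPseudoOrbit M x₀ y → y h = 0) ∧
    (∀ a : A, π a = 0 → π (E a) = 0) := by
  -- π is continuous
  letI : CStarAlgebra A := {}
  letI : CStarAlgebra (H →L[ℂ] H) := {}
  have hπcont : Continuous π :=
    AddMonoidHomClass.continuous_of_bound π 1 fun a => by
      simpa using NonUnitalStarAlgHom.norm_apply_le π a
  -- the fundamental GNS identity
  have key : ∀ (m a : A), ⟪π m ξ, π a (π m ξ)⟫_ℂ = x₀ ⟨E (star m * a * m), hErange _⟩ := by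
    intro m a
    calc ⟪π m ξ, π a (π m ξ)⟫_ℂ
        = ⟪ξ, ContinuousLinearMap.adjoint (π m) (π a (π m ξ))⟫_ℂ :=
          (ContinuousLinearMap.adjoint_inner_right _ _ _).symm
      _ = ⟪ξ, π (star m * a * m) ξ⟫_ℂ := by
          rw [← ContinuousLinearMap.star_eq_adjoint, ← map_star π]
          simp [map_mul]
      _ = x₀ ⟨E (star m * a * m), hErange _⟩ := hGNS _
  -- for h ∈ M, the inner product simplifies
  have keyM : ∀ (m : A) (hm : IsNormalizer M m) (h : M),
      ⟪π m ξ, π (h : A) (π m ξ)⟫_ℂ = x₀ ⟨star m * (h : A) * m, hm.conj_mem _ h.2⟩ := by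
    intro m hm h
    rw [key m h]
    congr 1
    ext
    exact hEfix _ (hm.conj_mem _ h.2)
  -- first part
  have part1 : ∀ h : M, π (h : A) = 0 ↔
      ∀ y : M →⋆ₐ[ℂ] ℂ, InPseudoOrbit M x₀ y → y h = 0 := by
    intro h
    constructor
    · intro hπh y hy
      obtain ⟨m, hm, hne, ha⟩ := hy
      have h1 := keyM m hm h
      rw [hπh] at h1
      simp only [ContinuousLinearMap.zero_apply, inner_zero_right] at h1
      have hmz : y h * x₀ ⟨star m * m, hm.sq_mem⟩ = 0 := (ha h).symm.trans h1.symm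
      exact (mul_eq_zero.mp hmz).resolve_right hne
    · intro hy
      have hzero : ∀ n, IsNormalizer M n → π (h : A) (π n ξ) = 0 := by
        intro n hn
        by_cases hcz : x₀ ⟨star n * n, hn.sq_mem⟩ = 0
        · have hnz : π n ξ = 0 := by
            rw [← inner_self_eq_zero (𝕜 := ℂ)]
            have h1 := keyM n hn 1
            simpa [hcz] using h1
          rw [← mul_one n, map_mul]
          simp [ContinuousLinearMap.comp_apply, hnz]
        · obtain ⟨y, hy'⟩ := exists_alpha_character M hMcomm x₀ n hn hcz
          have hyh : y h = 0 := hy y ⟨n, hn, hcz, hy'⟩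
          rw [← inner_self_eq_zero (𝕜 := ℂ)]
          calc ⟪π (h : A) (π n ξ), π (h : A) (π n ξ)⟫_ℂ
              = ⟪π n ξ, ContinuousLinearMap.adjoint (π (h : A)) (π (h : A) (π n ξ))⟫_ℂ :=
                (ContinuousLinearMap.adjoint_inner_right _ _ _).symm
            _ = ⟪π n ξ, π ((star h * h : M) : A) (π n ξ)⟫_ℂ := by
                rw [← ContinuousLinearMap.star_eq_adjoint, ← map_star π]
                push_cast
                simp [map_mul]
            _ = x₀ ⟨star n * ((star h * h : M) : A) * n, hn.conj_mem _ (star h * h).2⟩ :=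
                keyM n hn (star h * h)
            _ = y (star h * h) * x₀ ⟨star n * n, hn.sq_mem⟩ := hy' (star h * h)
            _ = 0 := by rw [map_mul, hyh, mul_zero, zero_mul]
      have hzero' : ∀ a : A, π (h : A) (π a ξ) = 0 := by
        have hScl : IsClosed {a : A | π (h : A) (π a ξ) = 0} := by
          have : Continuous fun a : A => π (h : A) (π a ξ) :=
            (π (h : A)).continuous.comp
              ((ContinuousLinearMap.apply ℂ H ξ).continuous.comp hπcont)
          exact isClosed_eq this continuous_const
        have hsub : (↑(Submodule.span ℂ {n : A | IsNormalizer M n}) : Set A)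
            ⊆ {a : A | π (h : A) (π a ξ) = 0} := by
          intro a ha
          induction ha using Submodule.span_induction with
          | mem n hn => exact hzero n hn
          | zero => simp
          | add u v _ _ hu hv =>
              simp only [Set.mem_setOf_eq] at hu hv ⊢
              rw [map_add]
              simp [hu, hv]
          | smul r u _ hu =>
              simp only [Set.mem_setOf_eq] at hu ⊢
              rw [map_smul]
              simp [hu]
        intro a
        have : a ∈ closure (↑(Submodule.span ℂ {n : A | IsNormalizer M n}) : Set A) :=
          hreg a
        exact hScl.closure_subset_iff.mpr hsub this
      ext v
      have hv : v ∈ closure (Set.range fun a : A => π a ξ) := hcyc v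
      have hScl : IsClosed {w : H | π (h : A) w = 0} :=
        isClosed_eq (π (h : A)).continuous continuous_const
      have hsub : Set.range (fun a : A => π a ξ) ⊆ {w : H | π (h : A) w = 0} := by
        rintro _ ⟨a, rfl⟩
        exact hzero' a
      simpa using hScl.closure_subset_iff.mpr hsub hv
  refine ⟨part1, ?_⟩
  intro a hπa
  refine (part1 ⟨E a, hErange a⟩).mpr ?_
  intro y hy
  obtain ⟨m, hm, hne, ha⟩ := hy
  have h1 : x₀ ⟨star m * E a * m, hm.conj_mem _ (hErange a)⟩ = 0 := by
    have h2 := key m a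
    rw [hπa] at h2
    simp only [ContinuousLinearMap.zero_apply, inner_zero_right] at h2
    have heq : (⟨star m * E a * m, hm.conj_mem _ (hErange a)⟩ : M)
        = ⟨E (star m * a * m), hErange _⟩ := by
      ext
      exact (hEcov m hm a).symm
    rw [heq]
    exact h2.symm
  have h3 : y ⟨E a, hErange a⟩ * x₀ ⟨star m * m, hm.sq_mem⟩ = 0 :=
    (ha ⟨E a, hErange a⟩).symm.trans h1
  exact (mul_eq_zero.mp h3).resolve_right hne
end

section
/- (i) For all a, b ∈ 𝔄, if π(a) = π(b) then π(E(a)) = π(E(b)); hence E₀(π(a)) := π(E(a)) is a well-defined idempotent linear map from π(𝔄) onto π(M). (ii) E₀ is faithful: for every a ∈ 𝔄, if π(E(a* a)) = 0 then π(a) = 0. -/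
open scoped ComplexOrder InnerProductSpace

variable {A : Type*} [NormedRing A] [StarRing A] [CStarRing A]
  [NormedAlgebra ℂ A] [CompleteSpace A] [StarModule ℂ A]
  [PartialOrder A] [StarOrderedRing A]

set_option linter.unusedSectionVars false
set_option linter.unusedVariables false
set_option linter.unnecessarySeqFocus false

open scoped CStarAlgebra

lemma isNormalizer_of_mem {M : StarSubalgebra ℂ A} {m : A} (hm : m ∈ M) :
    IsNormalizer M m where
  conj_mem h hh := mul_mem (mul_mem (star_mem hm) hh) hm
  conj_mem' h hh := mul_mem (mul_mem hm hh) (star_mem hm)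
  sq_mem := mul_mem (star_mem hm) hm
  sq_mem' := mul_mem hm (star_mem hm)

lemma E_left_module (M : StarSubalgebra ℂ A) (E : A →ₗ[ℂ] A)
    (hEcov : ∀ k, IsNormalizer M k → ∀ a, E (star k * a * k) = star k * E a * k)
    {m : A} (hm : m ∈ M) (a : A) : E (m * a) = m * E a := by
  have c0 := hEcov (star m) (isNormalizer_of_mem (star_mem hm)) a
  rw [star_star] at c0
  -- c0 : E (m * a * star m) = m * E a * star m
  have c1 := hEcov (star m + 1) (isNormalizer_of_mem (add_mem (star_mem hm) (one_mem _))) a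
  rw [star_add, star_star, star_one] at c1
  have e1 : (m + 1) * a * (star m + 1) = m * a * star m + (m * a + (a * star m + a)) := by
    noncomm_ring
  have e1' : (m + 1) * E a * (star m + 1)
      = m * E a * star m + (m * E a + (E a * star m + E a)) := by noncomm_ring
  rw [e1, e1', map_add, map_add, map_add, c0] at c1
  have h1 : E (m * a) + (E (a * star m) + E a)
      = m * E a + (E a * star m + E a) := add_left_cancel c1
  have h1' : E (m * a) + E (a * star m) = m * E a + E a * star m := by
    have := h1
    rw [← add_assoc, ← add_assoc] at this
    exact add_right_cancel this
  have c2 := hEcov (star m + Complex.I • 1)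
    (isNormalizer_of_mem (add_mem (star_mem hm) (SMulMemClass.smul_mem _ (one_mem _)))) a
  rw [star_add, star_star, star_smul, star_one, Complex.star_def, Complex.conj_I] at c2
  -- c2 : E ((m + (-I) • 1) * a * (star m + I • 1)) = (m + (-I) • 1) * E a * (star m + I • 1)
  have e2 : (m + (-Complex.I) • 1) * a * (star m + Complex.I • 1)
      = m * a * star m + (Complex.I • (m * a) + ((-Complex.I) • (a * star m) + a)) := by
    simp only [add_mul, mul_add, smul_mul_assoc, mul_smul_comm, one_mul, mul_one, smul_smul]
    match_scalars <;> ring_nf <;> simp [Complex.I_sq]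
  have e2' : (m + (-Complex.I) • 1) * E a * (star m + Complex.I • 1)
      = m * E a * star m + (Complex.I • (m * E a) + ((-Complex.I) • (E a * star m) + E a)) := by
    simp only [add_mul, mul_add, smul_mul_assoc, mul_smul_comm, one_mul, mul_one, smul_smul]
    match_scalars <;> ring_nf <;> simp [Complex.I_sq]
  rw [e2, e2', map_add, map_add, map_add, map_smul, map_smul, c0] at c2
  have h2 : Complex.I • E (m * a) + ((-Complex.I) • E (a * star m) + E a)
      = Complex.I • (m * E a) + ((-Complex.I) • (E a * star m) + E a) := add_left_cancel c2
  have h2' : Complex.I • E (m * a) + (-Complex.I) • E (a * star m)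
      = Complex.I • (m * E a) + (-Complex.I) • (E a * star m) := by
    rw [← add_assoc, ← add_assoc] at h2
    exact add_right_cancel h2
  have h2'' : E (m * a) - E (a * star m) = m * E a - E a * star m := by
    have := congrArg (fun x => (-Complex.I) • x) h2'
    simp only [smul_add, smul_smul, neg_mul, mul_neg, neg_neg, Complex.I_mul_I, one_smul,
      neg_one_smul] at this
    simpa [sub_eq_add_neg] using this
  have h3 : (2 : ℂ) • E (m * a) = (2 : ℂ) • (m * E a) := by
    calc (2 : ℂ) • E (m * a)
        = (E (m * a) + E (a * star m)) + (E (m * a) - E (a * star m)) := by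
          rw [two_smul]; abel
      _ = (m * E a + E a * star m) + (m * E a - E a * star m) := by rw [h1', h2'']
      _ = (2 : ℂ) • (m * E a) := by rw [two_smul]; abel
  have := congrArg (fun x => (2 : ℂ)⁻¹ • x) h3
  simpa [smul_smul, inv_mul_cancel₀ (two_ne_zero (α := ℂ))] using this

/-- (i) `E₀(π(a)) := π(E(a))` is well defined on `π(A)`, idempotent, and restricts to the
identity on `π(M)` (so it is an idempotent linear map of `π(A)` onto `π(M)`);
(ii) `E₀` is faithful: `π(E(a* a)) = 0` implies `π(a) = 0`. -/
theorem expectation_descends_and_is_faithful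
    (M : StarSubalgebra ℂ A) (hMclosed : IsClosed (M : Set A))
    (hMcomm : ∀ a ∈ M, ∀ b ∈ M, a * b = b * a)
    (E : A →ₗ[ℂ] A)
    (hErange : ∀ a, E a ∈ M)
    (hEfix : ∀ h ∈ M, E h = h)
    (hEpos : ∀ a : A, 0 ≤ a → 0 ≤ E a)
    (hEcov : ∀ k, IsNormalizer M k → ∀ a, E (star k * a * k) = star k * E a * k)
    (hreg : Dense (↑(Submodule.span ℂ {n : A | IsNormalizer M n}) : Set A))
    (x₀ : M →⋆ₐ[ℂ] ℂ)
    {H : Type*} [NormedAddCommGroup H] [InnerProductSpace ℂ H] [CompleteSpace H]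
    (π : A →⋆ₐ[ℂ] (H →L[ℂ] H)) (ξ : H)
    (hcyc : Dense (Set.range fun a : A => π a ξ))
    (hGNS : ∀ a : A, ⟪ξ, π a ξ⟫_ℂ = x₀ ⟨E a, hErange a⟩) :
    (∀ a b : A, π a = π b → π (E a) = π (E b)) ∧
    (∀ a : A, π (E (E a)) = π (E a)) ∧
    (∀ h ∈ M, π (E h) = π h) ∧
    (∀ a : A, π (E (star a * a)) = 0 → π a = 0) := by
  letI : CStarAlgebra A := { }
  letI : CStarAlgebra (H →L[ℂ] H) := { }
  have hπcont : Continuous π := map_continuous π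
  -- adjoint relation
  have hπadj : ∀ (c : A) (v w : H), ⟪π c v, w⟫_ℂ = ⟪v, π (star c) w⟫_ℂ := by
    intro c v w
    rw [map_star, ContinuousLinearMap.star_eq_adjoint,
      ContinuousLinearMap.adjoint_inner_right]
  have hinner : ∀ c : A, ⟪π c ξ, π c ξ⟫_ℂ = ⟪ξ, π (star c * c) ξ⟫_ℂ := by
    intro c
    rw [hπadj, map_mul, ContinuousLinearMap.mul_apply]
  -- x₀ on M is given by the vector state
  have hx₀ : ∀ (h : A) (hh : h ∈ M), x₀ ⟨h, hh⟩ = ⟪ξ, π h ξ⟫_ℂ := by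
    intro h hh
    have : (⟨h, hh⟩ : M) = ⟨E h, hErange h⟩ := Subtype.ext (hEfix h hh).symm
    rw [this, ← hGNS]
  -- an operator vanishing on all π(n)ξ, n a normalizer, vanishes
  have hext : ∀ T : H →L[ℂ] H, (∀ n : A, IsNormalizer M n → T (π n ξ) = 0) → T = 0 := by
    intro T hT
    have hb : ∀ b : A, T (π b ξ) = 0 := by
      have hcont : Continuous fun b : A => T (π b ξ) :=
        T.continuous.comp (((ContinuousLinearMap.apply ℂ H ξ).continuous).comp hπcont)
      have hcl : IsClosed {b : A | T (π b ξ) = 0} := isClosed_eq hcont continuous_const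
      have hsub : (↑(Submodule.span ℂ {n : A | IsNormalizer M n}) : Set A)
          ⊆ {b : A | T (π b ξ) = 0} := by
        intro b hb
        refine Submodule.span_induction (fun n hn => hT n hn) ?_ ?_ ?_ hb
        · simp
        · intro u v _ _ h1 h2
          simp only [Set.mem_setOf_eq, map_add, ContinuousLinearMap.add_apply] at *
          rw [h1, h2, add_zero]
        · intro c u _ h1
          simp only [Set.mem_setOf_eq, map_smul, ContinuousLinearMap.smul_apply] at *
          rw [h1, smul_zero]
      intro b
      have hbmem : b ∈ closure (↑(Submodule.span ℂ {n : A | IsNormalizer M n}) : Set A) := by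
        rw [hreg.closure_eq]; trivial
      exact closure_minimal hsub hcl hbmem
    ext v
    have hcl2 : IsClosed {v : H | T v = 0} := isClosed_eq T.continuous continuous_const
    have hvmem : v ∈ closure (Set.range fun a : A => π a ξ) := by
      rw [hcyc.closure_eq]; trivial
    have := closure_minimal (by rintro _ ⟨b, rfl⟩; exact hb b) hcl2 hvmem
    simpa using this
  -- key lemma (i): π(a) = 0 implies π(E a) = 0
  have keyA : ∀ a : A, π a = 0 → π (E a) = 0 := by
    intro a ha
    apply hext
    intro n hn
    have hc : π (E a) (π n ξ) = π (E a * n) ξ := by rw [map_mul]; rfl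
    rw [hc, ← inner_self_eq_zero (𝕜 := ℂ)]
    have hcc : star (E a * n) * (E a * n) = star n * (star (E a) * E a) * n := by
      rw [star_mul]; noncomm_ring
    have hMEa : star (E a) * E a ∈ M := mul_mem (star_mem (hErange a)) (hErange a)
    have hEcc : E (star (E a * n) * (E a * n)) = E (star n * (star (E a) * a) * n) := by
      rw [hcc, hEcov n hn, hEfix _ hMEa, ← E_left_module M E hEcov (star_mem (hErange a)) a,
        ← hEcov n hn]
    have hzero : π (star n * (star (E a) * a) * n) = 0 := by
      have : star n * (star (E a) * a) * n = (star n * star (E a)) * a * n := by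
        noncomm_ring
      rw [this, map_mul, map_mul, ha, mul_zero, zero_mul]
    have harg : (⟨E (star (E a * n) * (E a * n)), hErange _⟩ : M)
        = ⟨E (star n * (star (E a) * a) * n), hErange _⟩ := Subtype.ext hEcc
    calc ⟪π (E a * n) ξ, π (E a * n) ξ⟫_ℂ
        = ⟪ξ, π (star (E a * n) * (E a * n)) ξ⟫_ℂ := hinner _
      _ = x₀ ⟨E (star (E a * n) * (E a * n)), hErange _⟩ := hGNS _
      _ = x₀ ⟨E (star n * (star (E a) * a) * n), hErange _⟩ := by rw [harg]
      _ = ⟪ξ, π (star n * (star (E a) * a) * n) ξ⟫_ℂ := (hGNS _).symm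
      _ = 0 := by rw [hzero]; simp
  refine ⟨?_, ?_, ?_, ?_⟩
  · intro a b hab
    have h0 : π (a - b) = 0 := by rw [map_sub, hab, sub_self]
    have := keyA _ h0
    rwa [map_sub, map_sub, sub_eq_zero] at this
  · intro a
    rw [hEfix (E a) (hErange a)]
  · intro h hh
    rw [hEfix h hh]
  · -- faithfulness
    intro a hE0
    apply hext
    intro n hn
    have hc : π a (π n ξ) = π (a * n) ξ := by rw [map_mul]; rfl
    rw [hc, ← inner_self_eq_zero (𝕜 := ℂ)]
    have hcc : star (a * n) * (a * n) = star n * (star a * a) * n := by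
      rw [star_mul]; noncomm_ring
    have hmem : star n * E (star a * a) * n ∈ M := hn.conj_mem _ (hErange _)
    have hzero : π (star n * E (star a * a) * n) = 0 := by
      rw [map_mul, map_mul, hE0, mul_zero, zero_mul]
    have harg : (⟨E (star (a * n) * (a * n)), hErange _⟩ : M)
        = ⟨star n * E (star a * a) * n, hmem⟩ :=
      Subtype.ext (by rw [hcc]; exact hEcov n hn (star a * a))
    calc ⟪π (a * n) ξ, π (a * n) ξ⟫_ℂ
        = ⟪ξ, π (star (a * n) * (a * n)) ξ⟫_ℂ := hinner _
      _ = x₀ ⟨E (star (a * n) * (a * n)), hErange _⟩ := hGNS _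
      _ = x₀ ⟨star n * E (star a * a) * n, hmem⟩ := by rw [harg]
      _ = ⟪ξ, π (star n * E (star a * a) * n) ξ⟫_ℂ := hx₀ _ hmem
      _ = 0 := by rw [hzero]; simp
end

section
/- Let n₁, n₂ be normalizers of M and h₁, h₂ ∈ M with x₀(h₁) ≠ 0, x₀(h₂) ≠ 0, and n₁ h₁ = n₂ h₂. Then π(n₁)ξ = c · π(n₂)ξ, where c = x₀(h₂)/x₀(h₁) ≠ 0. -/
open scoped ComplexOrder InnerProductSpace

variable {A : Type*} [NormedRing A] [StarRing A] [CStarRing A]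
  [NormedAlgebra ℂ A] [CompleteSpace A] [StarModule ℂ A]
  [PartialOrder A] [StarOrderedRing A]

/-- If `n₁, n₂` are normalizers of `M`, `h₁, h₂ ∈ M` with `x₀(h₁) ≠ 0 ≠ x₀(h₂)` and
`n₁ h₁ = n₂ h₂`, then in the GNS representation of `a ↦ x₀(E(a))` one has
`π(n₁)ξ = c · π(n₂)ξ` with `c = x₀(h₂)/x₀(h₁) ≠ 0`. -/
theorem gns_vectors_of_equivalent_normalizers
    (M : StarSubalgebra ℂ A) (hMclosed : IsClosed (M : Set A))
    (hMcomm : ∀ a ∈ M, ∀ b ∈ M, a * b = b * a)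
    (E : A →ₗ[ℂ] A)
    (hErange : ∀ a, E a ∈ M)
    (hEfix : ∀ h ∈ M, E h = h)
    (hEpos : ∀ a : A, 0 ≤ a → 0 ≤ E a)
    (hEcov : ∀ k, IsNormalizer M k → ∀ a, E (star k * a * k) = star k * E a * k)
    (x₀ : M →⋆ₐ[ℂ] ℂ)
    {H : Type*} [NormedAddCommGroup H] [InnerProductSpace ℂ H] [CompleteSpace H]
    (π : A →⋆ₐ[ℂ] (H →L[ℂ] H)) (ξ : H)
    (hcyc : Dense (Set.range fun a : A => π a ξ))
    (hGNS : ∀ a : A, ⟪ξ, π a ξ⟫_ℂ = x₀ ⟨E a, hErange a⟩)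
    (n₁ n₂ : A) (hn₁ : IsNormalizer M n₁) (hn₂ : IsNormalizer M n₂)
    (h₁ h₂ : M) (hh₁ : x₀ h₁ ≠ 0) (hh₂ : x₀ h₂ ≠ 0)
    (heq : n₁ * (h₁ : A) = n₂ * (h₂ : A)) :
    π n₁ ξ = (x₀ h₂ / x₀ h₁) • π n₂ ξ ∧ x₀ h₂ / x₀ h₁ ≠ 0 := by
  have hM : ∀ a : M, ⟪ξ, π (a : A) ξ⟫_ℂ = x₀ a := fun a => by
    rw [hGNS]; exact congrArg x₀ (Subtype.ext (hEfix a a.2))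
  have hip : ∀ a b : A, ⟪π a ξ, π b ξ⟫_ℂ = ⟪ξ, π (star a * b) ξ⟫_ℂ := fun a b => by
    rw [map_mul, map_star, ContinuousLinearMap.mul_apply,
      ContinuousLinearMap.star_eq_adjoint, ContinuousLinearMap.adjoint_inner_right]
  have key : ∀ n : A, IsNormalizer M n → ∀ h : M, π (n * (h : A)) ξ = x₀ h • π n ξ := by
    intro n hn h
    set t : M := ⟨star n * n, hn.sq_mem⟩ with ht
    have e1 : star (n * (h : A)) * (n * (h : A)) = ((star h * t * h : M) : A) := by
      show _ = star (h : A) * (star n * n) * (h : A)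
      rw [star_mul]; noncomm_ring
    have e2 : star (n * (h : A)) * n = ((star h * t : M) : A) := by
      show _ = star (h : A) * (star n * n)
      rw [star_mul]; noncomm_ring
    have e3 : star n * (n * (h : A)) = ((t * h : M) : A) := by
      show _ = (star n * n) * (h : A)
      noncomm_ring
    rw [← sub_eq_zero, ← inner_self_eq_zero (𝕜 := ℂ)]
    rw [inner_sub_left, inner_sub_right, inner_sub_right, inner_smul_left,
      inner_smul_right, inner_smul_right, inner_smul_left, hip, hip, hip, hip,
      e1, e2, e3, show star n * n = ((t : M) : A) from rfl, hM, hM, hM, hM, map_mul, map_mul, map_mul, map_star]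
    simp only [Complex.star_def]
    ring
  have k1 := key n₁ hn₁ h₁
  rw [heq, key n₂ hn₂ h₂] at k1
  refine ⟨?_, div_ne_zero hh₂ hh₁⟩
  rw [div_eq_mul_inv, mul_comm, mul_smul, k1, inv_smul_smul₀ hh₁]
end

section
/- Suppose the character x₀ of M has trivial isotropy. Let n₁, n₂ be normalizers of M with x₀(n₁*n₁) ≠ 0 and x₀(n₂*n₂) ≠ 0 such that α_{n₁}(x₀) = α_{n₂}(x₀). Then x₀(E(n₂* n₁)) ≠ 0. -/
open scoped ComplexOrder InnerProductSpace

variable {A : Type*} [NormedRing A] [StarRing A] [CStarRing A]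
  [NormedAlgebra ℂ A] [CompleteSpace A] [StarModule ℂ A]
  [PartialOrder A] [StarOrderedRing A]

/-- `x₀` has trivial isotropy: every normalizer `m` with `x₀(m*m) ≠ 0` whose associated
partial map fixes `x₀` (i.e. `α_m(x₀) = x₀`) satisfies `x₀(E(m)) ≠ 0`. -/
def HasTrivialIsotropy (M : StarSubalgebra ℂ A) (E : A →ₗ[ℂ] A)
    (hErange : ∀ a, E a ∈ M) (x₀ : M →⋆ₐ[ℂ] ℂ) : Prop :=
  ∀ m, ∀ hm : IsNormalizer M m,
    x₀ ⟨star m * m, hm.sq_mem⟩ ≠ 0 → IsAlpha M m hm x₀ x₀ →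
      x₀ ⟨E m, hErange m⟩ ≠ 0

/-- If the character `x₀` has trivial isotropy and `n₁, n₂` are normalizers of `M` with
`x₀(n₁*n₁) ≠ 0`, `x₀(n₂*n₂) ≠ 0` and `α_{n₁}(x₀) = α_{n₂}(x₀)`, then
`x₀(E(n₂* n₁)) ≠ 0`. -/
theorem expectation_ne_zero_of_same_alpha_image
    (M : StarSubalgebra ℂ A) (hMclosed : IsClosed (M : Set A))
    (hMcomm : ∀ a ∈ M, ∀ b ∈ M, a * b = b * a)
    (E : A →ₗ[ℂ] A)
    (hErange : ∀ a, E a ∈ M)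
    (hEfix : ∀ h ∈ M, E h = h)
    (hEpos : ∀ a : A, 0 ≤ a → 0 ≤ E a)
    (hEcov : ∀ k, IsNormalizer M k → ∀ a, E (star k * a * k) = star k * E a * k)
    (x₀ : M →⋆ₐ[ℂ] ℂ)
    (htriv : HasTrivialIsotropy M E hErange x₀)
    (n₁ n₂ : A) (hn₁ : IsNormalizer M n₁) (hn₂ : IsNormalizer M n₂)
    (hx₁ : x₀ ⟨star n₁ * n₁, hn₁.sq_mem⟩ ≠ 0)
    (hx₂ : x₀ ⟨star n₂ * n₂, hn₂.sq_mem⟩ ≠ 0)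
    (y : M →⋆ₐ[ℂ] ℂ)
    (hy₁ : IsAlpha M n₁ hn₁ x₀ y) (hy₂ : IsAlpha M n₂ hn₂ x₀ y) :
    x₀ ⟨E (star n₂ * n₁), hErange _⟩ ≠ 0 := by
  -- abbreviation: multiplicativity of x₀ on elements of M given as triple products
  have xmul3 : ∀ (a b c : A) (ha : a ∈ M) (hb : b ∈ M) (hc : c ∈ M)
      (habc : a * b * c ∈ M),
      x₀ ⟨a * b * c, habc⟩ = x₀ ⟨a, ha⟩ * x₀ ⟨b, hb⟩ * x₀ ⟨c, hc⟩ := by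
    intro a b c ha hb hc habc
    have : (⟨a * b * c, habc⟩ : M) = ⟨a, ha⟩ * ⟨b, hb⟩ * ⟨c, hc⟩ := rfl
    rw [this, map_mul, map_mul]
  set m := star n₂ * n₁ with hm_def
  have hm : IsNormalizer M m := by
    constructor
    · intro h hh
      have h1 : n₂ * h * star n₂ ∈ M := hn₂.conj_mem' h hh
      have h2 := hn₁.conj_mem _ h1
      have : star m * h * m = star n₁ * (n₂ * h * star n₂) * n₁ := by
        simp [hm_def, star_mul, mul_assoc]
      rw [this]; exact h2
    · intro h hh
      have h1 : n₁ * h * star n₁ ∈ M := hn₁.conj_mem' h hh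
      have h2 := hn₂.conj_mem _ h1
      have : m * h * star m = star n₂ * (n₁ * h * star n₁) * n₂ := by
        simp [hm_def, star_mul, mul_assoc]
      rw [this]; exact h2
    · have h2 := hn₁.conj_mem _ hn₂.sq_mem'
      have : star m * m = star n₁ * (n₂ * star n₂) * n₁ := by
        simp [hm_def, star_mul, mul_assoc]
      rw [this]; exact h2
    · have h2 := hn₂.conj_mem _ hn₁.sq_mem'
      have : m * star m = star n₂ * (n₁ * star n₁) * n₂ := by
        simp [hm_def, star_mul, mul_assoc]
      rw [this]; exact h2
  -- y (n₂ n₂*) = x₀ (n₂* n₂)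
  have key₂ : y ⟨n₂ * star n₂, hn₂.sq_mem'⟩ = x₀ ⟨star n₂ * n₂, hn₂.sq_mem⟩ := by
    have h := hy₂ ⟨n₂ * star n₂, hn₂.sq_mem'⟩
    have e1 : (⟨star n₂ * (n₂ * star n₂) * n₂,
        hn₂.conj_mem _ hn₂.sq_mem'⟩ : M)
        = ⟨star n₂ * n₂, hn₂.sq_mem⟩ * ⟨star n₂ * n₂, hn₂.sq_mem⟩ := by
      apply Subtype.ext; show star n₂ * (n₂ * star n₂) * n₂ = _
      simp [mul_assoc]
    rw [e1, map_mul] at h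
    exact (mul_left_injective₀ hx₂ h.symm)
  -- y (n₂ h n₂*) = x₀(n₂*n₂) * x₀ h for h : M
  have keyh : ∀ h : M, y ⟨n₂ * (h : A) * star n₂, hn₂.conj_mem' _ h.2⟩
      = x₀ ⟨star n₂ * n₂, hn₂.sq_mem⟩ * x₀ h := by
    intro h
    have hk := hy₂ ⟨n₂ * (h : A) * star n₂, hn₂.conj_mem' _ h.2⟩
    have e1 : x₀ (⟨star n₂ * (n₂ * (h : A) * star n₂) * n₂,
        hn₂.conj_mem _ (hn₂.conj_mem' _ h.2)⟩ : M)
        = x₀ ⟨star n₂ * n₂, hn₂.sq_mem⟩ * x₀ h * x₀ ⟨star n₂ * n₂, hn₂.sq_mem⟩ := by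
      have e0 : star n₂ * (n₂ * (h : A) * star n₂) * n₂
          = (star n₂ * n₂) * (h : A) * (star n₂ * n₂) := by
        simp [mul_assoc]
      rw [show (⟨star n₂ * (n₂ * (h : A) * star n₂) * n₂,
          hn₂.conj_mem _ (hn₂.conj_mem' _ h.2)⟩ : M)
          = ⟨(star n₂ * n₂) * (h : A) * (star n₂ * n₂), e0 ▸
            (hn₂.conj_mem _ (hn₂.conj_mem' _ h.2))⟩ from Subtype.ext e0]
      exact xmul3 _ _ _ hn₂.sq_mem h.2 hn₂.sq_mem _
    -- note conj_mem vs conj_mem' proofs: the subtype values coincide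
    have hk' : x₀ (⟨star n₂ * (n₂ * (h : A) * star n₂) * n₂,
        hn₂.conj_mem _ (hn₂.conj_mem' _ h.2)⟩ : M)
        = y ⟨n₂ * (h : A) * star n₂, hn₂.conj_mem' _ h.2⟩
          * x₀ ⟨star n₂ * n₂, hn₂.sq_mem⟩ := hk
    rw [e1] at hk'
    exact (mul_left_injective₀ hx₂ hk').symm
  -- x₀(m* m) = x₀(n₂*n₂) * x₀(n₁*n₁)
  have hmm : x₀ ⟨star m * m, hm.sq_mem⟩
      = x₀ ⟨star n₂ * n₂, hn₂.sq_mem⟩ * x₀ ⟨star n₁ * n₁, hn₁.sq_mem⟩ := by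
    have e0 : star m * m = star n₁ * (n₂ * star n₂) * n₁ := by
      simp [hm_def, star_mul, mul_assoc]
    have h := hy₁ ⟨n₂ * star n₂, hn₂.sq_mem'⟩
    rw [show (⟨star m * m, hm.sq_mem⟩ : M)
      = ⟨star n₁ * (n₂ * star n₂) * n₁, hn₁.conj_mem _ hn₂.sq_mem'⟩ from Subtype.ext e0,
      h, key₂]
  have hmmne : x₀ ⟨star m * m, hm.sq_mem⟩ ≠ 0 := by
    rw [hmm]; exact mul_ne_zero hx₂ hx₁
  -- α_m(x₀) = x₀
  have halpha : IsAlpha M m hm x₀ x₀ := by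
    intro h
    have e0 : star m * (h : A) * m = star n₁ * (n₂ * (h : A) * star n₂) * n₁ := by
      simp [hm_def, star_mul, mul_assoc]
    have h1 := hy₁ ⟨n₂ * (h : A) * star n₂, hn₂.conj_mem' _ h.2⟩
    rw [show (⟨star m * (h : A) * m, hm.conj_mem _ h.2⟩ : M)
      = ⟨star n₁ * (n₂ * (h : A) * star n₂) * n₁,
        hn₁.conj_mem _ (hn₂.conj_mem' _ h.2)⟩ from Subtype.ext e0, h1, keyh, hmm]
    ring
  exact htriv m hm hmmne halpha
end

section
/- Let x₀ be a character of M and n a normalizer of M with x₀(n*n) ≠ 0, and let y = αₙ(x₀). Then y has trivial isotropy if and only if x₀ has trivial isotropy. -/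
open scoped ComplexOrder InnerProductSpace

variable {A : Type*} [NormedRing A] [StarRing A] [CStarRing A]
  [NormedAlgebra ℂ A] [CompleteSpace A] [StarModule ℂ A]
  [PartialOrder A] [StarOrderedRing A]

/-!
The partial maps `α` compose: `α_a(x) = y` and `α_b(y) = z` give `α_{ba}(x) = z`, and `α_{n*}`
inverts `αₙ`. An isotropy element `m` at `y = αₙ(x₀)` therefore yields the isotropy element
`n* m n` at `x₀`, and covariance of `E` gives `x₀(E(n* m n)) = y(E m) · x₀(n*n)`. So trivial
isotropy passes from `x₀` to `y`, and, applied to `n*`, back.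
-/

section

omit [CStarRing A] [CompleteSpace A] [PartialOrder A] [StarOrderedRing A]

lemma IsNormalizer.star {M : StarSubalgebra ℂ A} {a : A} (ha : IsNormalizer M a) :
    IsNormalizer M (star a) where
  conj_mem h hh := by simpa only [star_star] using ha.conj_mem' h hh
  conj_mem' h hh := by simpa only [star_star] using ha.conj_mem h hh
  sq_mem := by simpa only [star_star] using ha.sq_mem'
  sq_mem' := by simpa only [star_star] using ha.sq_mem

lemma IsNormalizer.mul {M : StarSubalgebra ℂ A} {a b : A} (ha : IsNormalizer M a)
    (hb : IsNormalizer M b) : IsNormalizer M (a * b) where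
  conj_mem h hh := by
    convert hb.conj_mem _ (ha.conj_mem h hh) using 1
    simp only [star_mul]; noncomm_ring
  conj_mem' h hh := by
    convert ha.conj_mem' _ (hb.conj_mem' h hh) using 1
    simp only [star_mul]; noncomm_ring
  sq_mem := by
    convert hb.conj_mem _ ha.sq_mem using 1
    simp only [star_mul]; noncomm_ring
  sq_mem' := by
    convert ha.conj_mem' _ hb.sq_mem' using 1
    simp only [star_mul]; noncomm_ring

namespace IsAlpha

variable {M : StarSubalgebra ℂ A} {a b : A} {ha : IsNormalizer M a} {hb : IsNormalizer M b}
  {x y z : M →⋆ₐ[ℂ] ℂ}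

lemma apply_mul_mul_star (hx : x ⟨star a * a, ha.sq_mem⟩ ≠ 0) (hxy : IsAlpha M a ha x y)
    (h : M) :
    y ⟨a * h * star a, ha.conj_mem' _ h.2⟩ = x h * x ⟨star a * a, ha.sq_mem⟩ := by
  have key := hxy ⟨a * h * star a, ha.conj_mem' _ h.2⟩
  have hsplit : (⟨star a * (a * h * star a) * a, ha.conj_mem _ (ha.conj_mem' _ h.2)⟩ : M)
      = ⟨star a * a, ha.sq_mem⟩ * h * ⟨star a * a, ha.sq_mem⟩ :=
    Subtype.ext (by simp only [MulMemClass.coe_mul]; noncomm_ring)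
  rw [hsplit, map_mul, map_mul] at key
  rw [mul_right_cancel₀ hx key.symm, mul_comm]

lemma apply_mul_star_self (hx : x ⟨star a * a, ha.sq_mem⟩ ≠ 0) (hxy : IsAlpha M a ha x y) :
    y ⟨a * star a, ha.sq_mem'⟩ = x ⟨star a * a, ha.sq_mem⟩ := by
  simpa using hxy.apply_mul_mul_star hx 1

lemma symm (hx : x ⟨star a * a, ha.sq_mem⟩ ≠ 0) (hxy : IsAlpha M a ha x y) :
    IsAlpha M (star a) ha.star y x := fun h => by
  simpa only [star_star, hxy.apply_mul_star_self hx] using hxy.apply_mul_mul_star hx h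

lemma apply_star_mul_self_mul (hxy : IsAlpha M a ha x y) (hb : IsNormalizer M b) :
    x ⟨star (b * a) * (b * a), (hb.mul ha).sq_mem⟩
      = y ⟨star b * b, hb.sq_mem⟩ * x ⟨star a * a, ha.sq_mem⟩ := by
  rw [← hxy ⟨star b * b, hb.sq_mem⟩]
  congr 2
  simp only [star_mul, mul_assoc]

lemma comp (hxy : IsAlpha M a ha x y) (hyz : IsAlpha M b hb y z) :
    IsAlpha M (b * a) (hb.mul ha) x z := fun h => by
  have hconj : x ⟨star (b * a) * h * (b * a), (hb.mul ha).conj_mem h h.2⟩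
      = x ⟨star a * (star b * h * b) * a, ha.conj_mem _ (hb.conj_mem h h.2)⟩ := by
    congr 2
    simp only [star_mul, mul_assoc]
  rw [hconj, hxy ⟨_, hb.conj_mem h h.2⟩, hyz h, hxy.apply_star_mul_self_mul hb, mul_assoc]

end IsAlpha

lemma HasTrivialIsotropy.of_isAlpha {M : StarSubalgebra ℂ A} {E : A →ₗ[ℂ] A}
    {hErange : ∀ a, E a ∈ M}
    (hEcov : ∀ k, IsNormalizer M k → ∀ a, E (star k * a * k) = star k * E a * k)
    {x y : M →⋆ₐ[ℂ] ℂ} {n : A} {hn : IsNormalizer M n}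
    (hx : x ⟨star n * n, hn.sq_mem⟩ ≠ 0) (hxy : IsAlpha M n hn x y)
    (H : HasTrivialIsotropy M E hErange x) : HasTrivialIsotropy M E hErange y := by
  intro m hm hym hyy
  have hyx := hxy.symm hx
  have hk := hxy.comp (hyy.comp hyx)
  have hk_sq : x ⟨_, ((hn.star.mul hm).mul hn).sq_mem⟩ ≠ 0 := by
    rw [hxy.apply_star_mul_self_mul (hn.star.mul hm), hyy.apply_star_mul_self_mul hn.star]
    simpa only [star_star, hxy.apply_mul_star_self hx] using
      mul_ne_zero (mul_ne_zero hx hym) hx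
  have hEk := H _ _ hk_sq hk
  have hEconj : (⟨E (star n * m * n), hErange _⟩ : M)
      = ⟨star n * E m * n, hn.conj_mem _ (hErange m)⟩ :=
    Subtype.ext (hEcov n hn m)
  rw [hEconj, hxy ⟨E m, hErange m⟩] at hEk
  exact left_ne_zero_of_mul hEk

end

theorem hasTrivialIsotropy_iff_of_isAlpha_general
    (M : StarSubalgebra ℂ A)
    (E : A →ₗ[ℂ] A)
    (hErange : ∀ a, E a ∈ M)
    (hEcov : ∀ k, IsNormalizer M k → ∀ a, E (star k * a * k) = star k * E a * k)
    (x₀ y : M →⋆ₐ[ℂ] ℂ)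
    (n : A) (hn : IsNormalizer M n)
    (hx : x₀ ⟨star n * n, hn.sq_mem⟩ ≠ 0)
    (hy : IsAlpha M n hn x₀ y) :
    HasTrivialIsotropy M E hErange y ↔ HasTrivialIsotropy M E hErange x₀ := by
  have hy_sq : y ⟨star (star n) * star n, hn.star.sq_mem⟩ ≠ 0 := by
    simpa only [star_star, hy.apply_mul_star_self hx]
  exact ⟨fun H => H.of_isAlpha hEcov hy_sq (hy.symm hx), fun H => H.of_isAlpha hEcov hx hy⟩

/-- Trivial isotropy is preserved along the pseudo-orbit: if `n` is a normalizer of `M` with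
`x₀(n*n) ≠ 0` and `y = αₙ(x₀)`, then `y` has trivial isotropy iff `x₀` has trivial
isotropy. -/
theorem hasTrivialIsotropy_iff_of_isAlpha
    (M : StarSubalgebra ℂ A) (hMclosed : IsClosed (M : Set A))
    (hMcomm : ∀ a ∈ M, ∀ b ∈ M, a * b = b * a)
    (E : A →ₗ[ℂ] A)
    (hErange : ∀ a, E a ∈ M)
    (hEfix : ∀ h ∈ M, E h = h)
    (hEpos : ∀ a : A, 0 ≤ a → 0 ≤ E a)
    (hEcov : ∀ k, IsNormalizer M k → ∀ a, E (star k * a * k) = star k * E a * k)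
    (x₀ y : M →⋆ₐ[ℂ] ℂ)
    (n : A) (hn : IsNormalizer M n)
    (hx : x₀ ⟨star n * n, hn.sq_mem⟩ ≠ 0)
    (hy : IsAlpha M n hn x₀ y) :
    HasTrivialIsotropy M E hErange y ↔ HasTrivialIsotropy M E hErange x₀ :=
  hasTrivialIsotropy_iff_of_isAlpha_general M E hErange hEcov x₀ y n hn hx hy
end

section
/- Let Y be a set of characters of M such that the union ⋃_{y ∈ Y} 𝒢(y) of their pseudo-orbits is weak-* dense in the character space of M. If a ∈ 𝔄 satisfies z(E(a* a)) = 0 for every character z ∈ ⋃_{y ∈ Y} 𝒢(y), then a = 0. (Consequently, the direct sum over y ∈ Y of the GNS representations of the states a ↦ y(E(a)) is faithful, hence isometric.) -/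
open scoped ComplexOrder InnerProductSpace

variable {A : Type*} [NormedRing A] [StarRing A] [CStarRing A]
  [NormedAlgebra ℂ A] [CompleteSpace A] [StarModule ℂ A]
  [PartialOrder A] [StarOrderedRing A]

/-! Every character of `M` is a pointwise limit of characters in the union of the pseudo-orbits,
at which `E(a*a) ∈ M` vanishes; hence every character of `M` kills `E(a*a)`. As `M` is a
commutative C⋆-algebra, its Gelfand transform is injective, so `E(a*a) = 0`, and `a = 0` by
faithfulness of `E`. -/

theorem CommCStarAlgebra.eq_zero_of_forall_starAlgHom_apply_eq_zero {B : Type*}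
    [CommCStarAlgebra B] {b : B} (h : ∀ φ : B →⋆ₐ[ℂ] ℂ, φ b = 0) : b = 0 :=
  (gelfandTransform_bijective B).injective <| by
    rw [map_zero]
    ext φ
    exact h φ

theorem StarSubalgebra.eq_zero_of_forall_starAlgHom_apply_eq_zero {B : Type*} [NormedRing B]
    [StarRing B] [CStarRing B] [NormedAlgebra ℂ B] [CompleteSpace B] [StarModule ℂ B]
    (M : StarSubalgebra ℂ B) (hMclosed : IsClosed (M : Set B))
    (hMcomm : ∀ a ∈ M, ∀ b ∈ M, a * b = b * a) {b : M}
    (h : ∀ φ : M →⋆ₐ[ℂ] ℂ, φ b = 0) : b = 0 :=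
  letI : CStarAlgebra B := { }
  haveI : IsClosed (M : Set B) := hMclosed
  letI : CommCStarAlgebra M :=
    { StarSubalgebra.cstarAlgebra M with
      mul_comm := fun x y => Subtype.ext (hMcomm x x.2 y y.2) }
  CommCStarAlgebra.eq_zero_of_forall_starAlgHom_apply_eq_zero h

theorem apply_eq_zero_of_forall_mem_of_approx {X F : Type*} [FunLike F X ℂ] {S : Set F}
    (hS : ∀ (φ : F) (s : Finset X) (ε : ℝ), 0 < ε → ∃ ψ ∈ S, ∀ x ∈ s, ‖ψ x - φ x‖ < ε)
    {x : X} (hx : ∀ ψ ∈ S, ψ x = 0) (φ : F) : φ x = 0 := by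
  by_contra hφ
  obtain ⟨ψ, hψS, hψ⟩ := hS φ {x} ‖φ x‖ (norm_pos_iff.mpr hφ)
  simpa [hx ψ hψS] using hψ x (Finset.mem_singleton_self x)

theorem eq_zero_of_vanishes_on_dense_union_of_pseudoOrbits_general
    (M : StarSubalgebra ℂ A) (hMclosed : IsClosed (M : Set A))
    (hMcomm : ∀ a ∈ M, ∀ b ∈ M, a * b = b * a)
    (E : A →ₗ[ℂ] A)
    (hErange : ∀ a, E a ∈ M)
    (hEfaithful : ∀ a : A, E (star a * a) = 0 → a = 0)
    (Y : Set (M →⋆ₐ[ℂ] ℂ))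
    (hdense : ∀ (x : M →⋆ₐ[ℂ] ℂ) (F : Finset M) (ε : ℝ), 0 < ε →
      ∃ y ∈ Y, ∃ z : M →⋆ₐ[ℂ] ℂ, InPseudoOrbit M y z ∧
        ∀ h ∈ F, ‖z h - x h‖ < ε) :
    ∀ a : A,
      (∀ y ∈ Y, ∀ z : M →⋆ₐ[ℂ] ℂ, InPseudoOrbit M y z →
        z ⟨E (star a * a), hErange _⟩ = 0) →
      a = 0 := by
  intro a ha
  let G : Set (M →⋆ₐ[ℂ] ℂ) := {z | ∃ y ∈ Y, InPseudoOrbit M y z}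
  have hG : ∀ (x : M →⋆ₐ[ℂ] ℂ) (F : Finset M) (ε : ℝ), 0 < ε →
      ∃ z ∈ G, ∀ h ∈ F, ‖z h - x h‖ < ε := fun x F ε hε ↦ by
    obtain ⟨y, hy, z, hz, hclose⟩ := hdense x F ε hε
    exact ⟨z, ⟨y, hy, hz⟩, hclose⟩
  have hE : (⟨E (star a * a), hErange _⟩ : M) = 0 :=
    M.eq_zero_of_forall_starAlgHom_apply_eq_zero hMclosed hMcomm
      (apply_eq_zero_of_forall_mem_of_approx hG fun z ⟨y, hy, hz⟩ ↦ ha y hy z hz)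
  exact hEfaithful a (congrArg Subtype.val hE)

/-- Let `Y` be a set of characters of `M` whose pseudo-orbits have weak-* dense union in the
character space of `M` (density spelled out via finite sets of elements of `M` and `ε > 0`).
If `E` is faithful and `z(E(a* a)) = 0` for every character `z` in `⋃_{y ∈ Y} 𝒢(y)`,
then `a = 0`. -/
theorem eq_zero_of_vanishes_on_dense_union_of_pseudoOrbits
    (M : StarSubalgebra ℂ A) (hMclosed : IsClosed (M : Set A))
    (hMcomm : ∀ a ∈ M, ∀ b ∈ M, a * b = b * a)
    (E : A →ₗ[ℂ] A)
    (hErange : ∀ a, E a ∈ M)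
    (hEfix : ∀ h ∈ M, E h = h)
    (hEpos : ∀ a : A, 0 ≤ a → 0 ≤ E a)
    (hEcov : ∀ k, IsNormalizer M k → ∀ a, E (star k * a * k) = star k * E a * k)
    (hEfaithful : ∀ a : A, E (star a * a) = 0 → a = 0)
    (Y : Set (M →⋆ₐ[ℂ] ℂ))
    (hdense : ∀ (x : M →⋆ₐ[ℂ] ℂ) (F : Finset M) (ε : ℝ), 0 < ε →
      ∃ y ∈ Y, ∃ z : M →⋆ₐ[ℂ] ℂ, InPseudoOrbit M y z ∧
        ∀ h ∈ F, ‖z h - x h‖ < ε) :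
    ∀ a : A,
      (∀ y ∈ Y, ∀ z : M →⋆ₐ[ℂ] ℂ, InPseudoOrbit M y z →
        z ⟨E (star a * a), hErange _⟩ = 0) →
      a = 0 :=
  eq_zero_of_vanishes_on_dense_union_of_pseudoOrbits_general M hMclosed hMcomm E hErange hEfaithful
    Y hdense
end

section
/- Let n be a normalizer of M and let f, g ∈ M satisfy n* f n = g · (n*n). Then f · n = n · g. (This is the algebraic form of the identity f n = n (f ∘ αₙ) for the partial homeomorphism αₙ associated to the normalizer n.) -/
open scoped ComplexOrder InnerProductSpace

variable {A : Type*} [NormedRing A] [StarRing A] [CStarRing A]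
  [NormedAlgebra ℂ A] [CompleteSpace A] [StarModule ℂ A]
  [PartialOrder A] [StarOrderedRing A]

/-- Algebraic form of the identity `f n = n (f ∘ αₙ)`: if `n` is a normalizer of the
norm-closed commutative *-subalgebra `M` and `f, g ∈ M` satisfy `n* f n = g (n*n)`,
then `f n = n g`. -/
theorem normalizer_intertwines
    (M : StarSubalgebra ℂ A) (hMclosed : IsClosed (M : Set A))
    (hMcomm : ∀ a ∈ M, ∀ b ∈ M, a * b = b * a)
    (n : A) (hn : IsNormalizer M n)
    (f g : M)
    (hfg : star n * (f : A) * n = (g : A) * (star n * n)) :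
    (f : A) * n = n * (g : A) := by
  set F : A := (f : A) with hFdef
  set G : A := (g : A) with hGdef
  have hF : F ∈ M := f.2
  have hG : G ∈ M := g.2
  have hsF : star F ∈ M := star_mem hF
  have hsG : star G ∈ M := star_mem hG
  have hN2 : star n * n ∈ M := hn.sq_mem
  have hNN : n * star n ∈ M := hn.sq_mem'
  have hFF : star F * F ∈ M := mul_mem hsF hF
  have hT1 : star n * (star F * F) * n ∈ M := hn.conj_mem _ hFF
  -- starred hypothesis : n* F* n = G* (n*n)
  have hfg' : star n * star F * n = star G * (star n * n) := by
    have := congrArg star hfg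
    simp only [star_mul, star_star] at this
    rw [mul_assoc] at this
    rw [← mul_assoc, ← mul_assoc] at this
    rw [this, hMcomm _ hN2 _ hsG]
  -- the key reassociation identity
  have key : (star n * star F * n) * (star n * F * n)
      = (star n * n) * (star n * (star F * F) * n) := by
    have comm1 : star F * (n * star n) = (n * star n) * star F := hMcomm _ hsF _ hNN
    calc (star n * star F * n) * (star n * F * n)
        = star n * (star F * (n * star n)) * (F * n) := by
          simp only [mul_assoc]
      _ = star n * ((n * star n) * star F) * (F * n) := by rw [comm1]
      _ = (star n * n) * (star n * (star F * F) * n) := by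
          simp only [mul_assoc]
  -- define c and show c * (n*n) = 0
  set c : A := star n * (star F * F) * n - star G * G * (star n * n) with hcdef
  have hc : c ∈ M := sub_mem hT1 (mul_mem (mul_mem hsG hG) hN2)
  have hcN2 : c * (star n * n) = 0 := by
    have h1 : (star n * (star F * F) * n) * (star n * n)
        = star G * G * (star n * n) * (star n * n) := by
      rw [hMcomm _ hT1 _ hN2, ← key, hfg, hfg']
      calc star G * (star n * n) * (G * (star n * n))
          = star G * ((star n * n) * G) * (star n * n) := by simp only [mul_assoc]
        _ = star G * (G * (star n * n)) * (star n * n) := by rw [hMcomm _ hN2 _ hG]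
        _ = star G * G * (star n * n) * (star n * n) := by simp only [mul_assoc]
    rw [hcdef, sub_mul, h1, sub_self]
  -- c is self-adjoint
  have hcs : star c = c := by
    rw [hcdef, star_sub]
    congr 1
    · simp only [star_mul, star_star]
      simp only [mul_assoc]
    · simp only [star_mul, star_star]
      rw [hMcomm _ hN2 _ (mul_mem hsG hG)]
  -- n * c = 0, hence c * n* = 0
  have hnc : n * c = 0 := by
    rw [← CStarRing.star_mul_self_eq_zero_iff]
    have h5 : star (n * c) * (n * c) = c * (star n * n) * c := by
      simp only [star_mul, hcs]
      simp only [mul_assoc]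
    rw [h5, hcN2, zero_mul]
  have hcn : c * star n = 0 := by
    have := congrArg star hnc
    simp only [star_mul, hcs, star_zero] at this
    exact this
  -- c * c = 0 hence c = 0
  have hcc : c = 0 := by
    have h3 : c * (star G * G * (star n * n)) = 0 := by
      rw [← mul_assoc, hMcomm _ hc _ (mul_mem hsG hG), mul_assoc, hcN2, mul_zero]
    have h4 : c * (star n * (star F * F) * n) = 0 := by
      rw [show star n * (star F * F) * n = star n * ((star F * F) * n) from
        mul_assoc _ _ _, ← mul_assoc, hcn, zero_mul]
    have h2 : c * c = 0 := by
      nth_rewrite 2 [hcdef]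
      rw [mul_sub, h4, h3, sub_zero]
    have := CStarRing.star_mul_self_eq_zero_iff c
    rw [hcs, h2] at this
    exact this.mp rfl
  -- conclude : star d * d = c = 0
  have e2 : star n * star F * (n * G) = star G * G * (star n * n) := by
    rw [← mul_assoc, hfg', mul_assoc, hMcomm _ hN2 _ hG, ← mul_assoc]
  have e3 : star G * star n * (F * n) = star G * G * (star n * n) := by
    rw [mul_assoc, ← mul_assoc (star n) F n, hfg, ← mul_assoc]
  have e4 : star G * star n * (n * G) = star G * G * (star n * n) := by
    rw [mul_assoc, ← mul_assoc (star n) n G, hMcomm _ hN2 _ hG, ← mul_assoc]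
  have hd : star (F * n - n * G) * (F * n - n * G) = c := by
    rw [star_sub, star_mul, star_mul, sub_mul, mul_sub, mul_sub, e2, e3, e4,
      sub_self, sub_zero, hcdef]
    congr 1
    simp only [mul_assoc]
  have h0 : F * n - n * G = 0 := by
    rw [← CStarRing.star_mul_self_eq_zero_iff, hd, hcc]
  exact sub_eq_zero.mp h0
end

section
/- Let n be a normalizer of M, x a character of M with x(n*n) ≠ 0, and y a character of M with x(n* h n) = y(h) · x(n*n) for all h ∈ M (i.e., y = αₙ(x)). Then y(n n*) = x(n*n). -/
open scoped ComplexOrder InnerProductSpace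

variable {A : Type*} [NormedRing A] [StarRing A] [CStarRing A]
  [NormedAlgebra ℂ A] [CompleteSpace A] [StarModule ℂ A]
  [PartialOrder A] [StarOrderedRing A]

theorem alpha_image_of_nnstar_general
    (M : StarSubalgebra ℂ A)
    (n : A) (hn : IsNormalizer M n)
    (x y : M →⋆ₐ[ℂ] ℂ)
    (hx : x ⟨star n * n, hn.sq_mem⟩ ≠ 0)
    (hy : IsAlpha M n hn x y) :
    y ⟨n * star n, hn.sq_mem'⟩ = x ⟨star n * n, hn.sq_mem⟩ := by
  have hsq : (⟨star n * (n * star n) * n, hn.conj_mem _ hn.sq_mem'⟩ : M)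
      = ⟨star n * n, hn.sq_mem⟩ * ⟨star n * n, hn.sq_mem⟩ :=
    Subtype.ext (by simp only [MulMemClass.mk_mul_mk, mul_assoc])
  have h := hy ⟨n * star n, hn.sq_mem'⟩
  rw [hsq, map_mul] at h
  exact (mul_right_cancel₀ hx h).symm

/-- If `n` is a normalizer of `M`, `x` a character with `x(n*n) ≠ 0` and `y = αₙ(x)`,
then `y(n n*) = x(n*n)`. -/
theorem alpha_image_of_nnstar
    (M : StarSubalgebra ℂ A) (hMclosed : IsClosed (M : Set A))
    (hMcomm : ∀ a ∈ M, ∀ b ∈ M, a * b = b * a)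
    (n : A) (hn : IsNormalizer M n)
    (x y : M →⋆ₐ[ℂ] ℂ)
    (hx : x ⟨star n * n, hn.sq_mem⟩ ≠ 0)
    (hy : IsAlpha M n hn x y) :
    y ⟨n * star n, hn.sq_mem'⟩ = x ⟨star n * n, hn.sq_mem⟩ :=
  alpha_image_of_nnstar_general M n hn x y hx hy
end

section
/- Let n be a normalizer of M and x a character of M with x(n*n) ≠ 0. Then the map h ↦ x(n* h n)/x(n*n) is a character of M: it is ℂ-linear, unital, multiplicative, and star-preserving. In particular, for every character x of M with x(n*n) ≠ 0 there exists a unique character αₙ(x) of M satisfying x(n* h n) = αₙ(x)(h) · x(n*n) for all h ∈ M. -/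
open scoped ComplexOrder InnerProductSpace

variable {A : Type*} [NormedRing A] [StarRing A] [CStarRing A]
  [NormedAlgebra ℂ A] [CompleteSpace A] [StarModule ℂ A]
  [PartialOrder A] [StarOrderedRing A]

set_option synthInstance.maxHeartbeats 1000000 in
set_option maxHeartbeats 2000000 in
/-- For a normalizer `n` of `M` and a character `x` with `x(n*n) ≠ 0`, the map
`F : h ↦ x(n* h n)/x(n*n)` is a character of `M` (linear, unital, multiplicative and
star-preserving); in particular there is a unique character `αₙ(x)` with
`x(n* h n) = αₙ(x)(h) · x(n*n)` for all `h ∈ M`. -/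
theorem alpha_exists_unique
    (M : StarSubalgebra ℂ A) (hMclosed : IsClosed (M : Set A))
    (hMcomm : ∀ a ∈ M, ∀ b ∈ M, a * b = b * a)
    (n : A) (hn : IsNormalizer M n)
    (x : M →⋆ₐ[ℂ] ℂ)
    (hx : x ⟨star n * n, hn.sq_mem⟩ ≠ 0)
    (F : M → ℂ)
    (hF : ∀ h : M, F h = x ⟨star n * (h : A) * n, hn.conj_mem (h : A) h.2⟩
      / x ⟨star n * n, hn.sq_mem⟩) :
    (∀ h k : M, F (h + k) = F h + F k) ∧
    (∀ (c : ℂ) (h : M), F (c • h) = c * F h) ∧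
    F 1 = 1 ∧
    (∀ h k : M, F (h * k) = F h * F k) ∧
    (∀ h : M, F (star h) = (starRingEnd ℂ) (F h)) ∧
    (∃! y : M →⋆ₐ[ℂ] ℂ, IsAlpha M n hn x y) := by
  set t : ℂ := x ⟨star n * n, hn.sq_mem⟩ with ht
  have hadd : ∀ h k : M, F (h + k) = F h + F k := by
    intro h k
    rw [hF, hF, hF]
    have e : (⟨star n * ((h + k : M) : A) * n, hn.conj_mem _ (h + k).2⟩ : M)
        = ⟨star n * (h : A) * n, hn.conj_mem _ h.2⟩
          + ⟨star n * (k : A) * n, hn.conj_mem _ k.2⟩ := by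
      apply Subtype.ext
      push_cast
      noncomm_ring
    rw [e, map_add, add_div]
  have hsmul : ∀ (c : ℂ) (h : M), F (c • h) = c * F h := by
    intro c h
    rw [hF, hF]
    have e : (⟨star n * ((c • h : M) : A) * n, hn.conj_mem _ (c • h).2⟩ : M)
        = c • ⟨star n * (h : A) * n, hn.conj_mem _ h.2⟩ := by
      apply Subtype.ext
      push_cast
      rw [mul_smul_comm, smul_mul_assoc]
    rw [e, map_smul, smul_eq_mul, mul_div_assoc]
  have hone : F 1 = 1 := by
    rw [hF]
    have e : (⟨star n * ((1 : M) : A) * n, hn.conj_mem _ (1 : M).2⟩ : M)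
        = ⟨star n * n, hn.sq_mem⟩ := by
      apply Subtype.ext
      push_cast
      rw [mul_one]
    rw [e, ← ht, div_self hx]
  have hzero : F 0 = 0 := by
    rw [hF]
    have e : (⟨star n * ((0 : M) : A) * n, hn.conj_mem _ (0 : M).2⟩ : M) = 0 := by
      apply Subtype.ext
      push_cast
      rw [mul_zero, zero_mul]
    rw [e, map_zero, zero_div]
  have keyA : ∀ h k : M,
      (star n * (h : A) * n) * (star n * (k : A) * n)
        = (star n * ((h : A) * (k : A)) * n) * (star n * n) := by
    intro h k
    have c2 : n * (star n * ((k : A) * n)) = (k : A) * (n * (star n * n)) := by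
      calc n * (star n * ((k : A) * n)) = (n * star n * (k : A)) * n := by
            simp [mul_assoc]
        _ = ((k : A) * (n * star n)) * n := by rw [hMcomm _ hn.sq_mem' _ k.2]
        _ = (k : A) * (n * (star n * n)) := by simp [mul_assoc]
    simp only [mul_assoc, c2]
  have key : ∀ h k : M,
      x ⟨star n * (h : A) * n, hn.conj_mem _ h.2⟩
        * x ⟨star n * (k : A) * n, hn.conj_mem _ k.2⟩
      = x ⟨star n * ((h * k : M) : A) * n, hn.conj_mem _ (h * k).2⟩ * t := by
    intro h k
    rw [← map_mul, ← map_mul]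
    congr 1
    apply Subtype.ext
    push_cast
    exact keyA h k
  have hmul : ∀ h k : M, F (h * k) = F h * F k := by
    intro h k
    rw [hF, hF, hF, div_mul_div_comm, key h k]
    rw [ht]
    field_simp
  have htreal : (starRingEnd ℂ) t = t := by
    rw [ht, starRingEnd_apply, ← map_star]
    congr 1
    apply Subtype.ext
    simp [star_mul]
  have hstar : ∀ h : M, F (star h) = (starRingEnd ℂ) (F h) := by
    intro h
    rw [hF, hF, map_div₀, htreal]
    congr 1
    rw [starRingEnd_apply, ← map_star]
    congr 1
    apply Subtype.ext
    push_cast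
    simp [star_mul, mul_assoc]
  have hcom : ∀ c : ℂ, F ((algebraMap ℂ M) c) = (algebraMap ℂ ℂ) c := by
    intro c
    rw [Algebra.algebraMap_eq_smul_one, hsmul, hone, mul_one,
      Algebra.algebraMap_self_apply]
  refine ⟨hadd, hsmul, hone, hmul, hstar, ?_⟩
  refine ⟨{ toFun := F
            map_one' := hone
            map_mul' := hmul
            map_zero' := hzero
            map_add' := hadd
            commutes' := hcom
            map_star' := hstar }, ?_, ?_⟩
  · intro h
    show _ = F h * t
    rw [hF h, div_mul_cancel₀ _ hx]
  · intro y hy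
    ext h
    have h1 := hy h
    have h2 : x ⟨star n * (h : A) * n, hn.conj_mem _ h.2⟩ = F h * t := by
      rw [hF h, div_mul_cancel₀ _ hx]
    rw [h2] at h1
    show y h = F h
    exact mul_right_cancel₀ hx h1.symm
end

section
/- Let x₀, y, z be characters of M, m a normalizer of M with x₀(m*m) ≠ 0 and y = α_m(x₀), and n a normalizer of M with y(n*n) ≠ 0 and z = αₙ(y). Then nm is a normalizer of M with x₀((nm)*(nm)) = y(n*n) · x₀(m*m) ≠ 0 and z = α_{nm}(x₀). Consequently, if y belongs to the pseudo-orbit 𝒢(x₀), then 𝒢(y) ⊆ 𝒢(x₀). -/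
open scoped ComplexOrder InnerProductSpace

variable {A : Type*} [NormedRing A] [StarRing A] [CStarRing A]
  [NormedAlgebra ℂ A] [CompleteSpace A] [StarModule ℂ A]
  [PartialOrder A] [StarOrderedRing A]

/-- Composition of the partial maps of normalizers: if `y = α_m(x₀)` with `x₀(m*m) ≠ 0` and
`z = αₙ(y)` with `y(n*n) ≠ 0`, then `n m` is a normalizer with
`x₀((nm)*(nm)) = y(n*n) · x₀(m*m) ≠ 0` and `z = α_{nm}(x₀)`; consequently `z` lies in the
pseudo-orbit `𝒢(x₀)` (so if `y ∈ 𝒢(x₀)` then `𝒢(y) ⊆ 𝒢(x₀)`). -/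
theorem alpha_comp_mem_pseudoOrbit
    (M : StarSubalgebra ℂ A) (hMclosed : IsClosed (M : Set A))
    (hMcomm : ∀ a ∈ M, ∀ b ∈ M, a * b = b * a)
    (x₀ y z : M →⋆ₐ[ℂ] ℂ)
    (m : A) (hm : IsNormalizer M m)
    (hxm : x₀ ⟨star m * m, hm.sq_mem⟩ ≠ 0)
    (hy : IsAlpha M m hm x₀ y)
    (n : A) (hn : IsNormalizer M n)
    (hyn : y ⟨star n * n, hn.sq_mem⟩ ≠ 0)
    (hz : IsAlpha M n hn y z) :
    ∃ hnm : IsNormalizer M (n * m),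
      x₀ ⟨star (n * m) * (n * m), hnm.sq_mem⟩
          = y ⟨star n * n, hn.sq_mem⟩ * x₀ ⟨star m * m, hm.sq_mem⟩ ∧
      x₀ ⟨star (n * m) * (n * m), hnm.sq_mem⟩ ≠ 0 ∧
      IsAlpha M (n * m) hnm x₀ z ∧
      InPseudoOrbit M x₀ z := by
  have hnm : IsNormalizer M (n * m) := by
    refine ⟨?_, ?_, ?_, ?_⟩
    · intro h hh
      have : star (n * m) * h * (n * m) = star m * (star n * h * n) * m := by
        simp [star_mul, mul_assoc]
      rw [this]; exact hm.conj_mem _ (hn.conj_mem _ hh)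
    · intro h hh
      have : (n * m) * h * star (n * m) = n * (m * h * star m) * star n := by
        simp [star_mul, mul_assoc]
      rw [this]; exact hn.conj_mem' _ (hm.conj_mem' _ hh)
    · have : star (n * m) * (n * m) = star m * (star n * n) * m := by
        simp [star_mul, mul_assoc]
      rw [this]; exact hm.conj_mem _ hn.sq_mem
    · have : (n * m) * star (n * m) = n * (m * star m) * star n := by
        simp [star_mul, mul_assoc]
      rw [this]; exact hn.conj_mem' _ hm.sq_mem'
  have key : ∀ (h : M), x₀ ⟨star (n * m) * (h : A) * (n * m), hnm.conj_mem _ h.2⟩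
      = z h * (y ⟨star n * n, hn.sq_mem⟩ * x₀ ⟨star m * m, hm.sq_mem⟩) := by
    intro h
    have e1 : (⟨star (n * m) * (h : A) * (n * m), hnm.conj_mem _ h.2⟩ : M)
        = ⟨star m * (star n * (h : A) * n) * m, hm.conj_mem _ (hn.conj_mem _ h.2)⟩ := by
      apply Subtype.ext; simp [star_mul, mul_assoc]
    rw [e1, hy ⟨star n * (h : A) * n, hn.conj_mem _ h.2⟩, hz h, mul_assoc]
  have key1 : x₀ ⟨star (n * m) * (n * m), hnm.sq_mem⟩
      = y ⟨star n * n, hn.sq_mem⟩ * x₀ ⟨star m * m, hm.sq_mem⟩ := by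
    have e1 : (⟨star (n * m) * (n * m), hnm.sq_mem⟩ : M)
        = ⟨star m * (star n * n) * m, hm.conj_mem _ hn.sq_mem⟩ := by
      apply Subtype.ext; simp [star_mul, mul_assoc]
    rw [e1, hy ⟨star n * n, hn.sq_mem⟩]
  have hne : x₀ ⟨star (n * m) * (n * m), hnm.sq_mem⟩ ≠ 0 := by
    rw [key1]; exact mul_ne_zero hyn hxm
  have halpha : IsAlpha M (n * m) hnm x₀ z := by
    intro h; rw [key h, key1]
  exact ⟨hnm, key1, hne, halpha, ⟨n * m, hnm, hne, halpha⟩⟩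
end

section
/- Let n be a normalizer of M, x₀ a character of M with x₀(n*n) ≠ 0, and y = αₙ(x₀). Then y(n n*) = x₀(n*n) ≠ 0, n* is a normalizer of M, and x₀ = α_{n*}(y); that is, y(n h n*) = x₀(h) · y(n n*) for all h ∈ M. -/
open scoped ComplexOrder InnerProductSpace

variable {A : Type*} [NormedRing A] [StarRing A] [CStarRing A]
  [NormedAlgebra ℂ A] [CompleteSpace A] [StarModule ℂ A]
  [PartialOrder A] [StarOrderedRing A]

/-- If `n` is a normalizer of `M`, `x₀` a character with `x₀(n*n) ≠ 0` and `y = αₙ(x₀)`,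
then `y(n n*) = x₀(n*n) ≠ 0`, `n*` is a normalizer of `M`, and `x₀ = α_{n*}(y)`, i.e.
`y(n h n*) = x₀(h) · y(n n*)` for all `h ∈ M`. -/
theorem alpha_inverse
    (M : StarSubalgebra ℂ A) (hMclosed : IsClosed (M : Set A))
    (hMcomm : ∀ a ∈ M, ∀ b ∈ M, a * b = b * a)
    (n : A) (hn : IsNormalizer M n)
    (x₀ y : M →⋆ₐ[ℂ] ℂ)
    (hx : x₀ ⟨star n * n, hn.sq_mem⟩ ≠ 0)
    (hy : IsAlpha M n hn x₀ y) :
    y ⟨n * star n, hn.sq_mem'⟩ = x₀ ⟨star n * n, hn.sq_mem⟩ ∧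
    y ⟨n * star n, hn.sq_mem'⟩ ≠ 0 ∧
    IsNormalizer M (star n) ∧
    (∀ h : M, y ⟨n * (h : A) * star n, hn.conj_mem' (h : A) h.2⟩
      = x₀ h * y ⟨n * star n, hn.sq_mem'⟩) := by
  set e : M := ⟨star n * n, hn.sq_mem⟩ with he
  set f : M := ⟨n * star n, hn.sq_mem'⟩ with hf
  have key1 : y f = x₀ e := by
    have h1 := hy f
    have h2 : (⟨star n * ((f : A)) * n, hn.conj_mem (f : A) f.2⟩ : M) = e * e := by
      apply Subtype.ext
      show star n * (n * star n) * n = (star n * n) * (star n * n)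
      noncomm_ring
    rw [h2, map_mul] at h1
    exact (mul_right_cancel₀ hx h1).symm
  refine ⟨key1, by rw [key1]; exact hx, ?_, ?_⟩
  · exact ⟨fun h hh => by simpa using hn.conj_mem' h hh,
      fun h hh => by simpa using hn.conj_mem h hh,
      by simpa using hn.sq_mem', by simpa using hn.sq_mem⟩
  · intro h
    have h1 := hy ⟨n * (h : A) * star n, hn.conj_mem' (h : A) h.2⟩
    have h2 : (⟨star n * ((n * (h : A) * star n)) * n,
        hn.conj_mem _ (hn.conj_mem' (h : A) h.2)⟩ : M) = e * h * e := by
      apply Subtype.ext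
      show star n * (n * (h : A) * star n) * n = (star n * n) * (h : A) * (star n * n)
      noncomm_ring
    rw [h2, map_mul, map_mul] at h1
    have := mul_right_cancel₀ hx h1.symm
    rw [this, key1]
    ring
end
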